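/- arXiv:2309.03138 — 12 statements merged into one kernel-verified Lean document; each statement's English description precedes it below -/
import Mathlib

section
/- Let A ∈ ℚ^{m×n}, b ∈ ℚ^m and j ∈ {1,…,n}. Let F ∈ ℚ^{m'×m} with m' = |I⁻_j(A)|·|I⁺_j(A)| + |N_j(A)| be the Fourier–Motzkin matrix consisting of exactly the rows (1/A_{u,j})·e_u − (1/A_{ℓ,j})·e_ℓ for every pair (ℓ,u) ∈ I⁻_j(A) × I⁺_j(A), and e_i for every i ∈ N_j(A), where e_k denotes the k-th standard unit row vector. Then for every x ∈ ℝ^n: x satisfies (F A) x ≤ F b if and only if there exists r ∈ ℝ such that x[j := r] satisfies A x ≤ b. -/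
/-- An assignment `x ∈ ℝ^n` satisfies the system `A x ≤ b` (componentwise). -/
def SatSys {ι : Type*} [Fintype ι] {n : ℕ} (A : Matrix ι (Fin n) ℚ) (b : ι → ℚ)
    (x : Fin n → ℝ) : Prop :=
  ∀ i, ∑ k, (A i k : ℝ) * x k ≤ (b i : ℝ)

/-- The `k`-th standard unit row vector. -/
def unitRow {ι : Type*} [DecidableEq ι] (k : ι) : ι → ℚ :=
  fun l => if l = k then 1 else 0

/-- The Fourier–Motzkin matrix for the elimination of variable `x_j` from `A x ≤ b`:
it has one row `(1/A_{u,j})·e_u − (1/A_{ℓ,j})·e_ℓ` for every pair `(ℓ,u) ∈ I⁻_j(A) × I⁺_j(A)`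
and one row `e_i` for every `i ∈ N_j(A)`; in particular its number of rows is
`|I⁻_j(A)|·|I⁺_j(A)| + |N_j(A)|`. -/
def fmMatrix {m n : ℕ} (A : Matrix (Fin m) (Fin n) ℚ) (j : Fin n) :
    Matrix (({ℓ : Fin m // A ℓ j < 0} × {u : Fin m // 0 < A u j}) ⊕ {i : Fin m // A i j = 0})
      (Fin m) ℚ :=
  Matrix.of fun p =>
    match p with
    | Sum.inl (ℓ, u) => (A u.1 j)⁻¹ • unitRow u.1 - (A ℓ.1 j)⁻¹ • unitRow ℓ.1
    | Sum.inr i => unitRow i.1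

private lemma fm_key1 (p q Su Sl bu bl xj : ℝ) (hp : 0 < p) (hq : q < 0)
    (h : p⁻¹*(p*xj + Su) - q⁻¹*(q*xj + Sl) ≤ p⁻¹*bu - q⁻¹*bl) :
    (bl - Sl)/q ≤ (bu - Su)/p := by
  have hp' : p ≠ 0 := hp.ne'
  have hq' : q ≠ 0 := hq.ne
  have e1 : p⁻¹*(p*xj + Su) = xj + Su/p := by field_simp
  have e2 : q⁻¹*(q*xj + Sl) = xj + Sl/q := by field_simp
  rw [e1, e2] at h
  rw [sub_div, sub_div]
  rw [inv_mul_eq_div, inv_mul_eq_div] at h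
  linarith

private lemma fm_key2 (p q Su Sl bu bl xj r : ℝ) (hp : 0 < p) (hq : q < 0)
    (hu : p*r + Su ≤ bu) (hl : q*r + Sl ≤ bl) :
    p⁻¹*(p*xj + Su) - q⁻¹*(q*xj + Sl) ≤ p⁻¹*bu - q⁻¹*bl := by
  have hp' : p ≠ 0 := hp.ne'
  have hq' : q ≠ 0 := hq.ne
  have e1 : p⁻¹*(p*xj + Su) = xj + Su/p := by field_simp
  have e2 : q⁻¹*(q*xj + Sl) = xj + Sl/q := by field_simp
  rw [e1, e2, inv_mul_eq_div, inv_mul_eq_div]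
  have h1 : Su/p ≤ (bu - p*r)/p := (div_le_div_iff_of_pos_right hp).mpr (by linarith)
  have h2 : (bl - q*r)/q ≤ Sl/q := (div_le_div_right_of_neg hq).mpr (by linarith)
  have e3 : (bu - p*r)/p = bu/p - r := by field_simp
  have e4 : (bl - q*r)/q = bl/q - r := by field_simp
  rw [e3] at h1; rw [e4] at h2
  linarith

private lemma fm_entry_inl {m n : ℕ} (A : Matrix (Fin m) (Fin n) ℚ) (j : Fin n)
    (ℓ : {ℓ : Fin m // A ℓ j < 0}) (u : {u : Fin m // 0 < A u j}) (k : Fin n) :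
    (fmMatrix A j * A) (Sum.inl (ℓ, u)) k
      = (A u.1 j)⁻¹ * A u.1 k - (A ℓ.1 j)⁻¹ * A ℓ.1 k := by
  simp [fmMatrix, unitRow, Matrix.mul_apply, sub_mul, mul_ite, ite_mul,
    Finset.sum_sub_distrib, smul_eq_mul]

private lemma fm_vec_inl {m n : ℕ} (A : Matrix (Fin m) (Fin n) ℚ) (j : Fin n) (b : Fin m → ℚ)
    (ℓ : {ℓ : Fin m // A ℓ j < 0}) (u : {u : Fin m // 0 < A u j}) :
    ((fmMatrix A j).mulVec b) (Sum.inl (ℓ, u))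
      = (A u.1 j)⁻¹ * b u.1 - (A ℓ.1 j)⁻¹ * b ℓ.1 := by
  simp [fmMatrix, unitRow, Matrix.mulVec, dotProduct, sub_mul, mul_ite, ite_mul,
    Finset.sum_sub_distrib, smul_eq_mul]

private lemma fm_entry_inr {m n : ℕ} (A : Matrix (Fin m) (Fin n) ℚ) (j : Fin n)
    (i : {i : Fin m // A i j = 0}) (k : Fin n) :
    (fmMatrix A j * A) (Sum.inr i) k = A i.1 k := by
  simp [fmMatrix, unitRow, Matrix.mul_apply, ite_mul]

private lemma fm_vec_inr {m n : ℕ} (A : Matrix (Fin m) (Fin n) ℚ) (j : Fin n) (b : Fin m → ℚ)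
    (i : {i : Fin m // A i j = 0}) :
    ((fmMatrix A j).mulVec b) (Sum.inr i) = b i.1 := by
  simp [fmMatrix, unitRow, Matrix.mulVec, dotProduct, ite_mul]

/-- Correctness of one Fourier–Motzkin elimination step: for every `x ∈ ℝ^n`,
`x` satisfies `(F A) x ≤ F b` iff there is `r ∈ ℝ` such that `x[j := r]` satisfies `A x ≤ b`. -/
theorem fourier_motzkin_step_correct {m n : ℕ} (A : Matrix (Fin m) (Fin n) ℚ)
    (b : Fin m → ℚ) (j : Fin n) (x : Fin n → ℝ) :
    SatSys (fmMatrix A j * A) ((fmMatrix A j).mulVec b) x ↔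
      ∃ r : ℝ, SatSys A b (Function.update x j r) := by
  classical
  set S : Fin m → ℝ := fun i => ∑ k ∈ Finset.univ.erase j, (A i k : ℝ) * x k with hS
  have hsplit : ∀ (i : Fin m) (y : Fin n → ℝ), (∀ k, k ≠ j → y k = x k) →
      ∑ k, (A i k : ℝ) * y k = (A i j : ℝ) * y j + S i := by
    intro i y hy
    rw [← Finset.add_sum_erase _ _ (Finset.mem_univ j)]
    congr 1
    exact Finset.sum_congr rfl fun k hk => by rw [hy k (Finset.ne_of_mem_erase hk)]
  -- the real-valued form of the rows of the F-system
  have hrow_inl : ∀ (ℓ : {ℓ : Fin m // A ℓ j < 0}) (u : {u : Fin m // 0 < A u j}),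
      ∑ k, (((fmMatrix A j * A) (Sum.inl (ℓ, u)) k : ℚ) : ℝ) * x k
        = ((A u.1 j : ℝ))⁻¹ * ((A u.1 j : ℝ) * x j + S u.1)
          - ((A ℓ.1 j : ℝ))⁻¹ * ((A ℓ.1 j : ℝ) * x j + S ℓ.1) := by
    intro ℓ u
    have h1 : ∀ k, (((fmMatrix A j * A) (Sum.inl (ℓ, u)) k : ℚ) : ℝ) * x k
        = ((A u.1 j : ℝ))⁻¹ * ((A u.1 k : ℝ) * x k)
          - ((A ℓ.1 j : ℝ))⁻¹ * ((A ℓ.1 k : ℝ) * x k) := by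
      intro k
      rw [fm_entry_inl]
      push_cast
      ring
    rw [Finset.sum_congr rfl fun k _ => h1 k, Finset.sum_sub_distrib,
      ← Finset.mul_sum, ← Finset.mul_sum,
      hsplit u.1 x (fun _ _ => rfl), hsplit ℓ.1 x (fun _ _ => rfl)]
  have hrow_inr : ∀ (i : {i : Fin m // A i j = 0}),
      ∑ k, (((fmMatrix A j * A) (Sum.inr i) k : ℚ) : ℝ) * x k = S i.1 := by
    intro i
    have h1 : ∀ k, (((fmMatrix A j * A) (Sum.inr i) k : ℚ) : ℝ) = (A i.1 k : ℝ) := by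
      intro k; rw [fm_entry_inr]
    rw [Finset.sum_congr rfl fun k _ => by rw [h1 k],
      hsplit i.1 x (fun _ _ => rfl)]
    have : ((A i.1 j : ℚ) : ℝ) = 0 := by rw [i.2]; norm_num
    rw [this]; ring
  have hupdate : ∀ (i : Fin m) (r : ℝ),
      ∑ k, (A i k : ℝ) * (Function.update x j r) k = (A i j : ℝ) * r + S i := by
    intro i r
    rw [hsplit i _ (fun k hk => Function.update_of_ne hk _ _), Function.update_self]
  constructor
  · intro h
    -- bounds
    have hlu : ∀ (ℓ : {ℓ : Fin m // A ℓ j < 0}) (u : {u : Fin m // 0 < A u j}),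
        ((b ℓ.1 : ℝ) - S ℓ.1) / (A ℓ.1 j : ℝ) ≤ ((b u.1 : ℝ) - S u.1) / (A u.1 j : ℝ) := by
      intro ℓ u
      have hc := h (Sum.inl (ℓ, u))
      rw [hrow_inl ℓ u] at hc
      rw [fm_vec_inl] at hc
      push_cast at hc
      exact fm_key1 _ _ _ _ _ _ _ (by exact_mod_cast u.2) (by exact_mod_cast ℓ.2) hc
    set low : {ℓ : Fin m // A ℓ j < 0} → ℝ :=
      fun ℓ => ((b ℓ.1 : ℝ) - S ℓ.1) / (A ℓ.1 j : ℝ) with hlow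
    set up : {u : Fin m // 0 < A u j} → ℝ :=
      fun u => ((b u.1 : ℝ) - S u.1) / (A u.1 j : ℝ) with hup
    obtain ⟨r, hrlow, hrup⟩ : ∃ r : ℝ,
        (∀ ℓ : {ℓ : Fin m // A ℓ j < 0}, low ℓ ≤ r) ∧
        (∀ u : {u : Fin m // 0 < A u j}, r ≤ up u) := by
      by_cases hL : Nonempty {ℓ : Fin m // A ℓ j < 0}
      · refine ⟨Finset.univ.sup' Finset.univ_nonempty low, ?_, ?_⟩
        · exact fun ℓ => Finset.le_sup' low (Finset.mem_univ ℓ)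
        · exact fun u => Finset.sup'_le _ low fun ℓ _ => hlu ℓ u
      · by_cases hU : Nonempty {u : Fin m // 0 < A u j}
        · refine ⟨Finset.univ.inf' Finset.univ_nonempty up, ?_, ?_⟩
          · exact fun ℓ => absurd ⟨ℓ⟩ hL
          · exact fun u => Finset.inf'_le up (Finset.mem_univ u)
        · exact ⟨0, fun ℓ => absurd ⟨ℓ⟩ hL, fun u => absurd ⟨u⟩ hU⟩
    refine ⟨r, fun i => ?_⟩
    rw [hupdate i r]
    rcases lt_trichotomy (A i j) 0 with hneg | hzero | hpos
    · have hb := hrlow ⟨i, hneg⟩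
      have hneg' : (A i j : ℝ) < 0 := by exact_mod_cast hneg
      rw [hlow, div_le_iff_of_neg hneg'] at hb
      linarith
    · have hc := h (Sum.inr ⟨i, hzero⟩)
      rw [hrow_inr ⟨i, hzero⟩, fm_vec_inr] at hc
      have hz' : (A i j : ℝ) = 0 := by exact_mod_cast hzero
      rw [hz']
      simpa using hc
    · have hb := hrup ⟨i, hpos⟩
      have hpos' : (0 : ℝ) < (A i j : ℝ) := by exact_mod_cast hpos
      rw [hup, le_div_iff₀ hpos'] at hb
      linarith
  · rintro ⟨r, hr⟩
    have hr' : ∀ i : Fin m, (A i j : ℝ) * r + S i ≤ (b i : ℝ) := fun i => by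
      have := hr i; rwa [hupdate i r] at this
    rintro (⟨ℓ, u⟩ | i)
    · rw [hrow_inl ℓ u, fm_vec_inl]
      push_cast
      exact fm_key2 _ _ _ _ _ _ _ r (by exact_mod_cast u.2) (by exact_mod_cast ℓ.2)
        (hr' u.1) (hr' ℓ.1)
    · rw [hrow_inr i, fm_vec_inr]
      have := hr' i.1
      have hz' : (A i.1 j : ℝ) = 0 := by exact_mod_cast i.2
      rw [hz'] at this
      linarith
end

section
/- Let A ∈ ℚ^{m×n}, b ∈ ℚ^m and j ∈ {1,…,n} with I⁻_j(A) ≠ ∅ and I⁺_j(A) ≠ ∅. Then for every x ∈ ℝ^n the following three statements are equivalent: (1) there exists r ∈ ℝ such that x[j := r] satisfies A x ≤ b; (2) there exists i ∈ I⁻_j(A) such that x satisfies fmpproj(A,b,j,i); (3) there exists i ∈ I⁺_j(A) such that x satisfies fmpproj(A,b,j,i). Equivalently, the projection of the solution set of A x ≤ b onto the variables other than x_j equals the union over i ∈ I⁻_j(A) of the solution sets of fmpproj(A,b,j,i), and also equals the union over i ∈ I⁺_j(A) of these solution sets. -/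
/-- The projection matrix `F ∈ ℚ^{(m−1)×m}` of the restricted projection of `x_j`
with respect to the designated row `i`: its rows, indexed by `i' ≠ i`, are
`(1/A_{i,j})·e_i − (1/A_{i',j})·e_{i'}` for `i' ∈ I⁻_j(A)\{i}`,
`−(1/A_{i,j})·e_i + (1/A_{i',j})·e_{i'}` for `i' ∈ I⁺_j(A)\{i}`, and
`e_{i'}` for `i' ∈ N_j(A)`. -/
def projMatrix {m n : ℕ} (A : Matrix (Fin m) (Fin n) ℚ) (j : Fin n) (i : Fin m) :
    Matrix {i' : Fin m // i' ≠ i} (Fin m) ℚ :=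
  Matrix.of fun i' =>
    if A i'.1 j < 0 then (A i j)⁻¹ • unitRow i - (A i'.1 j)⁻¹ • unitRow i'.1
    else if 0 < A i'.1 j then (A i'.1 j)⁻¹ • unitRow i'.1 - (A i j)⁻¹ • unitRow i
    else unitRow i'.1

/-- `x` satisfies the restricted projection `fmpproj(A,b,j,i)`, i.e. the system
`(F A) x ≤ F b` for the projection matrix `F` w.r.t. `j` and the designated row `i`. -/
def SatProj {m n : ℕ} (A : Matrix (Fin m) (Fin n) ℚ) (b : Fin m → ℚ) (j : Fin n)
    (i : Fin m) (x : Fin n → ℝ) : Prop :=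
  SatSys (projMatrix A j i * A) ((projMatrix A j i).mulVec b) x

/-!
Fix the coordinates of `x` other than `x_j`. A row `l` with `A l j ≠ 0` is tight at exactly one
value `tightValue l` of `x_j`, and bounds `x_j` from below if `A l j < 0` and from above if
`A l j > 0`; the rows with `A l j = 0` do not involve `x_j`. Row `i'` of `fmpproj(A,b,j,i)` is
row `i'` of `A x ≤ b` evaluated at `x_j := tightValue i`, so `x` satisfies `fmpproj(A,b,j,i)` iff
`x[j := tightValue i]` solves `A x ≤ b`. Finally, whenever some value of `x_j` is feasible, so are
the largest lower bound and the smallest upper bound.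
-/

open Matrix

lemma satSys_iff_mulVec_le {ι : Type*} [Fintype ι] {n : ℕ} (A : Matrix ι (Fin n) ℚ)
    (b : ι → ℚ) (x : Fin n → ℝ) :
    SatSys A b x ↔ ∀ i, (A.map (Rat.castHom ℝ) *ᵥ x) i ≤ b i :=
  Iff.rfl

lemma satSys_mul_iff {ι κ : Type*} [Fintype ι] [Fintype κ] {n : ℕ} (F : Matrix κ ι ℚ)
    (A : Matrix ι (Fin n) ℚ) (b : ι → ℚ) (x : Fin n → ℝ) :
    SatSys (F * A) (F *ᵥ b) x ↔ ∀ k,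
      (F.map (Rat.castHom ℝ) *ᵥ (A.map (Rat.castHom ℝ) *ᵥ x)) k ≤
        (F.map (Rat.castHom ℝ) *ᵥ fun i => (b i : ℝ)) k := by
  simp only [satSys_iff_mulVec_le, Matrix.map_mul, mulVec_mulVec]
  exact forall_congr' fun k => iff_of_eq (congrArg _ (RingHom.map_mulVec (Rat.castHom ℝ) F b k))

lemma mulVec_update {ι κ R : Type*} [Fintype κ] [DecidableEq κ] [CommRing R]
    (M : Matrix ι κ R) (x : κ → R) (j : κ) (r : R) (i : ι) :
    (M *ᵥ Function.update x j r) i = M i j * (r - x j) + (M *ᵥ x) i := by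
  have : Function.update x j r = x + Pi.single j (r - x j) := by
    ext k; by_cases hk : k = j <;> simp [hk]
  rw [this, mulVec_add, mulVec_single]
  simp [add_comm]

lemma projMatrix_mulVec_apply {m n : ℕ} (A : Matrix (Fin m) (Fin n) ℚ) (j : Fin n) (i : Fin m)
    (v : Fin m → ℝ) (i' : {i' : Fin m // i' ≠ i}) :
    ((projMatrix A j i).map (Rat.castHom ℝ) *ᵥ v) i' =
      if A i'.1 j < 0 then (A i j : ℝ)⁻¹ * v i - (A i'.1 j : ℝ)⁻¹ * v i'
      else if 0 < A i'.1 j then (A i'.1 j : ℝ)⁻¹ * v i' - (A i j : ℝ)⁻¹ * v i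
      else v i' := by
  rcases lt_trichotomy (A i'.1 j) 0 with h | h | h <;>
    simp [projMatrix, unitRow, h, lt_asymm, mulVec, dotProduct, sub_mul, Finset.sum_sub_distrib,
      apply_ite (Rat.cast : ℚ → ℝ), ite_mul]

section OrderedField

variable {𝕜 : Type*} [Field 𝕜] [LinearOrder 𝕜] [IsStrictOrderedRing 𝕜] {a g β t r : 𝕜}

lemma mul_sub_add_le_iff_of_neg (ha : a < 0) :
    a * (r - t) + g ≤ β ↔ t - a⁻¹ * (g - β) ≤ r := by
  have : a * (t - a⁻¹ * (g - β)) = a * t - (g - β) := by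
    rw [mul_sub, mul_inv_cancel_left₀ ha.ne]
  rw [← mul_le_mul_left_of_neg (a := r) ha, this]
  constructor <;> intro <;> linarith

lemma mul_sub_add_le_iff_of_pos (ha : 0 < a) :
    a * (r - t) + g ≤ β ↔ r ≤ t - a⁻¹ * (g - β) := by
  have : a * (t - a⁻¹ * (g - β)) = a * t - (g - β) := by
    rw [mul_sub, mul_inv_cancel_left₀ ha.ne']
  rw [← mul_le_mul_iff_right₀ (c := t - _) ha, this]
  constructor <;> intro <;> linarith

end OrderedField

section Projection

variable {m n : ℕ} (A : Matrix (Fin m) (Fin n) ℚ) (b : Fin m → ℚ) (j : Fin n) (x : Fin n → ℝ)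

noncomputable def tightValue (l : Fin m) : ℝ :=
  x j - (A l j : ℝ)⁻¹ * ((A.map (Rat.castHom ℝ) *ᵥ x) l - b l)

def RowAdmits (l : Fin m) (r : ℝ) : Prop :=
  (A l j < 0 → tightValue A b j x l ≤ r) ∧ (0 < A l j → r ≤ tightValue A b j x l) ∧
    (A l j = 0 → (A.map (Rat.castHom ℝ) *ᵥ x) l ≤ b l)

lemma satSys_update_iff (r : ℝ) :
    SatSys A b (Function.update x j r) ↔ ∀ l, RowAdmits A b j x l r := by
  rw [satSys_iff_mulVec_le]
  refine forall_congr' fun l => ?_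
  rw [mulVec_update, map_apply]
  rcases lt_trichotomy (A l j) 0 with h | h | h
  · simp [RowAdmits, tightValue, h, h.ne, lt_asymm h,
      mul_sub_add_le_iff_of_neg (Rat.cast_lt_zero.2 h)]
  · simp [RowAdmits, h]
  · simp [RowAdmits, tightValue, h, h.ne', lt_asymm h,
      mul_sub_add_le_iff_of_pos (Rat.cast_pos.2 h)]

lemma satProj_iff (i : Fin m) :
    SatProj A b j i x ↔ ∀ l, l ≠ i → RowAdmits A b j x l (tightValue A b j x i) := by
  rw [SatProj, satSys_mul_iff, Subtype.forall]
  refine forall₂_congr fun l hl => ?_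
  rw [projMatrix_mulVec_apply, projMatrix_mulVec_apply]
  rcases lt_trichotomy (A l j) 0 with h | h | h
  · simp only [RowAdmits, tightValue, h, h.ne, lt_asymm h, if_true, true_implies, false_implies,
      and_true]
    constructor <;> intro <;> linarith
  · simp [RowAdmits, h]
  · simp only [RowAdmits, tightValue, h, h.ne', lt_asymm h, if_true, if_false, true_implies,
      false_implies, true_and, and_true]
    constructor <;> intro <;> linarith

lemma rowAdmits_tightValue_self {i : Fin m} (hi : A i j ≠ 0) :
    RowAdmits A b j x i (tightValue A b j x i) :=
  ⟨fun _ => le_rfl, fun _ => le_rfl, fun h => absurd h hi⟩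

lemma satProj_iff_satSys_update {i : Fin m} (hi : A i j ≠ 0) :
    SatProj A b j i x ↔ SatSys A b (Function.update x j (tightValue A b j x i)) := by
  rw [satProj_iff, satSys_update_iff]
  refine ⟨fun h l => ?_, fun h l _ => h l⟩
  rcases eq_or_ne l i with rfl | hl
  · exact rowAdmits_tightValue_self A b j x hi
  · exact h l hl

lemma exists_neg_satSys_update_tightValue (hl : ∃ ℓ, A ℓ j < 0) {r : ℝ}
    (hr : SatSys A b (Function.update x j r)) :
    ∃ i, A i j < 0 ∧ SatSys A b (Function.update x j (tightValue A b j x i)) := by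
  rw [satSys_update_iff] at hr
  obtain ⟨i, hi, hmax⟩ := (Finset.univ.filter fun l => A l j < 0).exists_max_image
    (tightValue A b j x) (Finset.filter_nonempty_iff.2 (by simpa using hl))
  simp only [Finset.mem_filter, Finset.mem_univ, true_and] at hi hmax
  refine ⟨i, hi, (satSys_update_iff A b j x _).2 fun l => ⟨hmax l, fun hl => ?_, (hr l).2.2⟩⟩
  exact ((hr i).1 hi).trans ((hr l).2.1 hl)

lemma exists_pos_satSys_update_tightValue (hu : ∃ u, 0 < A u j) {r : ℝ}
    (hr : SatSys A b (Function.update x j r)) :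
    ∃ i, 0 < A i j ∧ SatSys A b (Function.update x j (tightValue A b j x i)) := by
  rw [satSys_update_iff] at hr
  obtain ⟨i, hi, hmin⟩ := (Finset.univ.filter fun l => 0 < A l j).exists_min_image
    (tightValue A b j x) (Finset.filter_nonempty_iff.2 (by simpa using hu))
  simp only [Finset.mem_filter, Finset.mem_univ, true_and] at hi hmin
  refine ⟨i, hi, (satSys_update_iff A b j x _).2 fun l => ⟨fun hl => ?_, hmin l, (hr l).2.2⟩⟩
  exact ((hr l).1 hl).trans ((hr i).2.1 hi)

end Projection

/-- The restricted projections for all lower bounds (resp. all upper bounds) of `x_j`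
exactly cover the projection of the solution set of `A x ≤ b` onto the variables
other than `x_j`. -/
theorem restricted_projection_covers {m n : ℕ} (A : Matrix (Fin m) (Fin n) ℚ)
    (b : Fin m → ℚ) (j : Fin n)
    (hl : ∃ ℓ, A ℓ j < 0) (hu : ∃ u, 0 < A u j) (x : Fin n → ℝ) :
    ((∃ r : ℝ, SatSys A b (Function.update x j r)) ↔
        ∃ i, A i j < 0 ∧ SatProj A b j i x) ∧
    ((∃ r : ℝ, SatSys A b (Function.update x j r)) ↔
        ∃ i, 0 < A i j ∧ SatProj A b j i x) := by
  refine ⟨⟨fun ⟨r, hr⟩ => ?_, fun ⟨i, hi, hp⟩ => ?_⟩, ⟨fun ⟨r, hr⟩ => ?_, fun ⟨i, hi, hp⟩ => ?_⟩⟩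
  · obtain ⟨i, hi, hsat⟩ := exists_neg_satSys_update_tightValue A b j x hl hr
    exact ⟨i, hi, (satProj_iff_satSys_update A b j x hi.ne).2 hsat⟩
  · exact ⟨_, (satProj_iff_satSys_update A b j x hi.ne).1 hp⟩
  · obtain ⟨i, hi, hsat⟩ := exists_pos_satSys_update_tightValue A b j x hu hr
    exact ⟨i, hi, (satProj_iff_satSys_update A b j x hi.ne').2 hsat⟩
  · exact ⟨_, (satProj_iff_satSys_update A b j x hi.ne').1 hp⟩
end

section
/- Let A ∈ ℚ^{m×n}, b ∈ ℚ^m and j ∈ {1,…,n} with I⁻_j(A) = ∅ or I⁺_j(A) = ∅. Then for every x ∈ ℝ^n: there exists r ∈ ℝ such that x[j := r] satisfies A x ≤ b if and only if x satisfies the subsystem of A x ≤ b consisting of the rows in N_j(A). -/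
lemma sum_update_key {m n : ℕ} (A : Matrix (Fin m) (Fin n) ℚ) (x : Fin n → ℝ)
    (j : Fin n) (r : ℝ) (i : Fin m) :
    ∑ k, (A i k : ℝ) * Function.update x j r k
      = (∑ k, (A i k : ℝ) * x k) + (A i j : ℝ) * (r - x j) := by
  rw [Finset.sum_eq_sum_sdiff_singleton_add (Finset.mem_univ j),
    Finset.sum_eq_sum_sdiff_singleton_add (Finset.mem_univ j)
      (fun k => (A i k : ℝ) * x k)]
  have hsum : ∑ k ∈ Finset.univ \ {j}, (A i k : ℝ) * Function.update x j r k
      = ∑ k ∈ Finset.univ \ {j}, (A i k : ℝ) * x k := by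
    refine Finset.sum_congr rfl fun k hk => ?_
    rw [Function.update_of_ne (by simpa using (Finset.mem_sdiff.mp hk).2)]
  rw [hsum, Function.update_self]
  ring

/-- If `x_j` has no lower bounds or no upper bounds in `A x ≤ b`, then `x` can be
extended by some value `r` for `x_j` to a solution of `A x ≤ b` iff `x` satisfies the
subsystem consisting of the rows in `N_j(A)` (those with zero coefficient at `x_j`). -/
theorem unbounded_elimination {m n : ℕ} (A : Matrix (Fin m) (Fin n) ℚ)
    (b : Fin m → ℚ) (j : Fin n)
    (h : (¬ ∃ ℓ, A ℓ j < 0) ∨ (¬ ∃ u, 0 < A u j)) (x : Fin n → ℝ) :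
    (∃ r : ℝ, SatSys A b (Function.update x j r)) ↔
      ∀ i, A i j = 0 → ∑ k, (A i k : ℝ) * x k ≤ (b i : ℝ) := by
  constructor
  · rintro ⟨r, hr⟩ i hij
    have := hr i
    rw [sum_update_key] at this
    simpa [hij] using this
  · intro hx
    set g : Fin m → ℝ := fun i =>
      ((b i : ℝ) - ∑ k, (A i k : ℝ) * x k + (A i j : ℝ) * x j) / (A i j : ℝ) with hg
    rcases h with hneg | hpos
    · push_neg at hneg
      obtain ⟨M, hM⟩ := Finite.exists_le fun i => -(g i)
      refine ⟨-M, fun i => ?_⟩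
      rw [sum_update_key]
      rcases lt_or_eq_of_le (hneg i) with hpos' | hzero
      · have hc : (0 : ℝ) < (A i j : ℝ) := by exact_mod_cast hpos'
        have hrle : -M ≤ g i := by linarith [hM i]
        have : (A i j : ℝ) * (-M) ≤ (A i j : ℝ) * g i :=
          mul_le_mul_of_nonneg_left hrle hc.le
        rw [hg] at this
        rw [mul_div_cancel₀ _ hc.ne'] at this
        linarith
      · have hz : (A i j : ℝ) = 0 := by exact_mod_cast hzero.symm
        have := hx i (by exact_mod_cast hzero.symm)
        simp [hz]
        linarith
    · push_neg at hpos
      obtain ⟨M, hM⟩ := Finite.exists_le g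
      refine ⟨M, fun i => ?_⟩
      rw [sum_update_key]
      rcases lt_or_eq_of_le (hpos i) with hneg' | hzero
      · have hc : ((A i j : ℝ)) < 0 := by exact_mod_cast hneg'
        have : (A i j : ℝ) * M ≤ (A i j : ℝ) * g i :=
          mul_le_mul_of_nonpos_left (hM i) hc.le
        rw [hg] at this
        rw [mul_div_cancel₀ _ hc.ne] at this
        linarith
      · have hz : (A i j : ℝ) = 0 := by exact_mod_cast hzero
        have := hx i (by exact_mod_cast hzero)
        simp [hz]
        linarith
end

section
/- Let A ∈ ℚ^{m×n}, b ∈ ℚ^m and j ∈ {1,…,n}. Then for every x ∈ ℝ^n: (∃ r ∈ ℝ such that x[j := r] satisfies A x ≤ b) if and only if x satisfies some system in FMplexElim⁻_j(A,b), if and only if x satisfies some system in FMplexElim⁺_j(A,b). -/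
/-- `x` satisfies the degenerate restricted projection `fmpproj(A,b,j,⊥)`, i.e. the
subsystem of `A x ≤ b` consisting of the rows in `N_j(A)`. -/
def SatProjBot {m n : ℕ} (A : Matrix (Fin m) (Fin n) ℚ) (b : Fin m → ℚ) (j : Fin n)
    (x : Fin n → ℝ) : Prop :=
  ∀ i, A i j = 0 → ∑ k, (A i k : ℝ) * x k ≤ (b i : ℝ)

/-- `x` satisfies some system in `FMplexElim⁻_j(A,b)`. -/
def SatElimLower {m n : ℕ} (A : Matrix (Fin m) (Fin n) ℚ) (b : Fin m → ℚ) (j : Fin n)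
    (x : Fin n → ℝ) : Prop :=
  if (∃ ℓ, A ℓ j < 0) ∧ (∃ u, 0 < A u j) then
    ∃ i, A i j < 0 ∧ SatProj A b j i x
  else SatProjBot A b j x

/-- `x` satisfies some system in `FMplexElim⁺_j(A,b)`. -/
def SatElimUpper {m n : ℕ} (A : Matrix (Fin m) (Fin n) ℚ) (b : Fin m → ℚ) (j : Fin n)
    (x : Fin n → ℝ) : Prop :=
  if (∃ ℓ, A ℓ j < 0) ∧ (∃ u, 0 < A u j) then
    ∃ i, 0 < A i j ∧ SatProj A b j i x
  else SatProjBot A b j x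

/-!
Write `t i` for the value of `x j` at which row `i` is tight. At `x[j := r]`, row `i` of
`A x ≤ b` says `t i ≤ r` if `A i j < 0`, `r ≤ t i` if `0 < A i j`, and does not involve `r`
if `A i j = 0`. Row `i'` of the restricted projection with designated row `i` is a positive
multiple of row `i'` after substituting `r := t i`, so `fmpproj(A,b,j,i)` holds exactly when
`t i` is a solution for `x j`. If some `r` works, so does the largest lower bound and the
smallest upper bound; if `x j` has no lower or no upper bounds, `r` can be moved past all
bounds, and only the rows of `N_j(A)` remain.
-/

namespace FMplex

section Residual

variable {ι κ : Type*} {n : ℕ}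

noncomputable def residual (A : Matrix ι (Fin n) ℚ) (b : ι → ℚ) (x : Fin n → ℝ) (i : ι) : ℝ :=
  ∑ k, (A i k : ℝ) * x k - b i

theorem satSys_iff_residual_nonpos [Fintype ι] (A : Matrix ι (Fin n) ℚ) (b : ι → ℚ)
    (x : Fin n → ℝ) :
    SatSys A b x ↔ ∀ i, residual A b x i ≤ 0 :=
  forall_congr' fun _ => sub_nonpos.symm

theorem residual_mul [Fintype ι] (F : Matrix κ ι ℚ) (A : Matrix ι (Fin n) ℚ) (b : ι → ℚ)
    (x : Fin n → ℝ) (r : κ) :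
    residual (F * A) (F.mulVec b) x r = ∑ l, (F r l : ℝ) * residual A b x l := by
  simp only [residual, Matrix.mul_apply, Matrix.mulVec, dotProduct, Rat.cast_sum, Rat.cast_mul,
    Finset.sum_mul, mul_sub, Finset.sum_sub_distrib, mul_assoc]
  rw [Finset.sum_comm]
  simp only [← Finset.mul_sum]

theorem residual_update (A : Matrix ι (Fin n) ℚ) (b : ι → ℚ) (x : Fin n → ℝ) (j : Fin n)
    (r : ℝ) (i : ι) :
    residual A b (Function.update x j r) i = residual A b x i + A i j * (r - x j) := by
  have hsum : ∑ k, (A i k : ℝ) * Function.update x j r k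
      = ∑ k, (A i k : ℝ) * x k + A i j * (r - x j) := by
    rw [← sub_eq_iff_eq_add', ← Finset.sum_sub_distrib,
      Finset.sum_eq_single j (fun k _ hk => by simp [hk]) (by simp)]
    simp [mul_sub]
  rw [residual, residual, hsum]
  ring

end Residual

section Bounds

variable {m n : ℕ} (A : Matrix (Fin m) (Fin n) ℚ) (b : Fin m → ℚ) (j : Fin n) (x : Fin n → ℝ)

noncomputable def tightValue (i : Fin m) : ℝ :=
  x j - residual A b x i / A i j

theorem residual_update_tightValue (i i' : Fin m) :
    residual A b (Function.update x j (tightValue A b j x i)) i'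
      = residual A b x i' - A i' j / A i j * residual A b x i := by
  rw [residual_update, tightValue]
  ring

theorem residual_update_tightValue_self {i : Fin m} (hi : A i j ≠ 0) :
    residual A b (Function.update x j (tightValue A b j x i)) i = 0 := by
  have hi' : (A i j : ℝ) ≠ 0 := by exact_mod_cast hi
  rw [residual_update_tightValue, div_self hi', one_mul, sub_self]

variable {A b j x}

theorem residual_update_nonpos_of_neg {i : Fin m} (hi : A i j < 0) (r : ℝ) :
    residual A b (Function.update x j r) i ≤ 0 ↔ tightValue A b j x i ≤ r := by
  have hi' : (A i j : ℝ) < 0 := by exact_mod_cast hi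
  rw [residual_update, tightValue, sub_le_comm, le_div_iff_of_neg hi']
  constructor <;> intro h <;> linarith

theorem residual_update_nonpos_of_pos {i : Fin m} (hi : 0 < A i j) (r : ℝ) :
    residual A b (Function.update x j r) i ≤ 0 ↔ r ≤ tightValue A b j x i := by
  have hi' : (0 : ℝ) < A i j := by exact_mod_cast hi
  rw [residual_update, tightValue, le_sub_comm, div_le_iff₀ hi']
  constructor <;> intro h <;> linarith

theorem residual_update_of_eq_zero {i : Fin m} (hi : A i j = 0) (r : ℝ) :
    residual A b (Function.update x j r) i = residual A b x i := by
  simp [residual_update, hi]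

end Bounds

section Projection

variable {m n : ℕ} {A : Matrix (Fin m) (Fin n) ℚ} {j : Fin n} {i : Fin m}

theorem sum_unitRow_mul (q : Fin m) (v : Fin m → ℝ) :
    ∑ l, (unitRow q l : ℝ) * v l = v q := by
  simp [unitRow, apply_ite (fun t : ℚ => (t : ℝ)), ite_mul]

theorem sum_smul_unitRow_sub_mul (a c : ℚ) (p q : Fin m) (v : Fin m → ℝ) :
    ∑ l, ((a • unitRow p - c • unitRow q) l : ℝ) * v l = a * v p - c * v q := by
  simp only [Pi.sub_apply, Pi.smul_apply, smul_eq_mul, Rat.cast_sub, Rat.cast_mul, sub_mul,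
    mul_assoc, Finset.sum_sub_distrib, ← Finset.mul_sum, sum_unitRow_mul]

theorem sum_projMatrix_mul_nonpos_iff (hi : A i j ≠ 0) (i' : {i' : Fin m // i' ≠ i})
    (v : Fin m → ℝ) :
    ∑ l, (projMatrix A j i i' l : ℝ) * v l ≤ 0 ↔ v i' - A i'.1 j / A i j * v i ≤ 0 := by
  have hi' : (A i j : ℝ) ≠ 0 := by exact_mod_cast hi
  simp only [projMatrix, Matrix.of_apply]
  split_ifs with hneg hpos
  · have hneg' : (A i'.1 j : ℝ) < 0 := by exact_mod_cast hneg
    rw [sum_smul_unitRow_sub_mul, Rat.cast_inv, Rat.cast_inv,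
      show (A i j : ℝ)⁻¹ * v i - (A i'.1 j : ℝ)⁻¹ * v i'
        = (-(A i'.1 j : ℝ))⁻¹ * (v i' - A i'.1 j / A i j * v i) by field_simp [hneg'.ne]; ring]
    exact smul_nonpos_iff_nonpos_of_pos_left (inv_pos.2 (neg_pos.2 hneg'))
  · have hpos' : (0 : ℝ) < A i'.1 j := by exact_mod_cast hpos
    rw [sum_smul_unitRow_sub_mul, Rat.cast_inv, Rat.cast_inv,
      show (A i'.1 j : ℝ)⁻¹ * v i' - (A i j : ℝ)⁻¹ * v i
        = (A i'.1 j : ℝ)⁻¹ * (v i' - A i'.1 j / A i j * v i) by field_simp [hpos'.ne']]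
    exact smul_nonpos_iff_nonpos_of_pos_left (inv_pos.2 hpos')
  · have hzero : A i'.1 j = 0 := by linarith
    simp [sum_unitRow_mul, hzero]

variable (b : Fin m → ℚ) (x : Fin n → ℝ)

theorem satProj_iff_satSys_update (hi : A i j ≠ 0) :
    SatProj A b j i x ↔ SatSys A b (Function.update x j (tightValue A b j x i)) := by
  simp only [SatProj, satSys_iff_residual_nonpos, residual_mul,
    sum_projMatrix_mul_nonpos_iff hi, ← residual_update_tightValue]
  refine ⟨fun h i' => ?_, fun h i' => h i'⟩
  by_cases hii' : i' = i
  · subst hii'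
    exact (residual_update_tightValue_self A b j x hi).le
  · exact h ⟨i', hii'⟩

end Projection

section Elimination

variable {m n : ℕ} {A : Matrix (Fin m) (Fin n) ℚ} {b : Fin m → ℚ} {j : Fin n} {x : Fin n → ℝ}

theorem satSys_update_iff (r : ℝ) :
    SatSys A b (Function.update x j r) ↔ ∀ i,
      (A i j < 0 → tightValue A b j x i ≤ r) ∧ (0 < A i j → r ≤ tightValue A b j x i) ∧
        (A i j = 0 → residual A b x i ≤ 0) := by
  rw [satSys_iff_residual_nonpos]
  refine forall_congr' fun i => ?_
  rcases lt_trichotomy (A i j) 0 with h | h | h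
  · simp [residual_update_nonpos_of_neg h, h, h.not_gt, h.ne]
  · simp [residual_update_of_eq_zero h, h]
  · simp [residual_update_nonpos_of_pos h, h, h.not_gt, h.ne']

theorem exists_satSys_update_iff_of_neg {ℓ : Fin m} (hℓ : A ℓ j < 0) :
    (∃ r, SatSys A b (Function.update x j r)) ↔
      ∃ i, A i j < 0 ∧ SatSys A b (Function.update x j (tightValue A b j x i)) := by
  refine ⟨fun ⟨r, hr⟩ => ?_, fun ⟨i, _, hi⟩ => ⟨_, hi⟩⟩
  obtain ⟨i, hi, hmax⟩ := (Finset.univ.filter fun l => A l j < 0).exists_max_image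
    (tightValue A b j x) ⟨ℓ, by simpa using hℓ⟩
  simp only [Finset.mem_filter, Finset.mem_univ, true_and] at hi hmax
  rw [satSys_update_iff] at hr
  refine ⟨i, hi, (satSys_update_iff _).2 fun i' => ⟨hmax i', fun hpos => ?_, (hr i').2.2⟩⟩
  exact ((hr i).1 hi).trans ((hr i').2.1 hpos)

theorem exists_satSys_update_iff_of_pos {u : Fin m} (hu : 0 < A u j) :
    (∃ r, SatSys A b (Function.update x j r)) ↔
      ∃ i, 0 < A i j ∧ SatSys A b (Function.update x j (tightValue A b j x i)) := by
  refine ⟨fun ⟨r, hr⟩ => ?_, fun ⟨i, _, hi⟩ => ⟨_, hi⟩⟩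
  obtain ⟨i, hi, hmin⟩ := (Finset.univ.filter fun l => 0 < A l j).exists_min_image
    (tightValue A b j x) ⟨u, by simpa using hu⟩
  simp only [Finset.mem_filter, Finset.mem_univ, true_and] at hi hmin
  rw [satSys_update_iff] at hr
  refine ⟨i, hi, (satSys_update_iff _).2 fun i' => ⟨fun hneg => ?_, hmin i', (hr i').2.2⟩⟩
  exact ((hr i').1 hneg).trans ((hr i).2.1 hi)

theorem satProjBot_iff : SatProjBot A b j x ↔ ∀ i, A i j = 0 → residual A b x i ≤ 0 :=
  forall₂_congr fun _ _ => sub_nonpos.symm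

theorem exists_satSys_update_iff_satProjBot (h : (∀ i, 0 ≤ A i j) ∨ ∀ i, A i j ≤ 0) :
    (∃ r, SatSys A b (Function.update x j r)) ↔ SatProjBot A b j x := by
  simp only [satSys_update_iff, satProjBot_iff]
  refine ⟨fun ⟨_, hr⟩ i => (hr i).2.2, fun hbot => ?_⟩
  rcases h with hnonneg | hnonpos
  · obtain ⟨r, hr⟩ := Finite.exists_ge (tightValue A b j x)
    exact ⟨r, fun i => ⟨fun hneg => absurd (hnonneg i) hneg.not_ge, fun _ => hr i, hbot i⟩⟩
  · obtain ⟨r, hr⟩ := Finite.exists_le (tightValue A b j x)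
    exact ⟨r, fun i => ⟨fun _ => hr i, fun hpos => absurd (hnonpos i) hpos.not_ge, hbot i⟩⟩

end Elimination

end FMplex

open FMplex in
/-- Correctness of FMplex variable elimination: `x` extends to a solution of `A x ≤ b`
iff `x` satisfies some system in `FMplexElim⁻_j(A,b)`, iff `x` satisfies some system
in `FMplexElim⁺_j(A,b)`. -/
theorem fmplex_elim_correct {m n : ℕ} (A : Matrix (Fin m) (Fin n) ℚ) (b : Fin m → ℚ)
    (j : Fin n) (x : Fin n → ℝ) :
    ((∃ r : ℝ, SatSys A b (Function.update x j r)) ↔ SatElimLower A b j x) ∧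
    ((∃ r : ℝ, SatSys A b (Function.update x j r)) ↔ SatElimUpper A b j x) := by
  unfold SatElimLower SatElimUpper
  split_ifs with hc
  · obtain ⟨⟨ℓ, hℓ⟩, ⟨u, hu⟩⟩ := hc
    refine ⟨(exists_satSys_update_iff_of_neg hℓ).trans ?_,
      (exists_satSys_update_iff_of_pos hu).trans ?_⟩
    · exact exists_congr fun i => and_congr_right fun hi =>
        (satProj_iff_satSys_update b x hi.ne).symm
    · exact exists_congr fun i => and_congr_right fun hi =>
        (satProj_iff_satSys_update b x hi.ne').symm
  · have hbot := exists_satSys_update_iff_satProjBot (A := A) (b := b) (x := x)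
      (by simpa only [not_and_or, not_exists, not_lt] using hc)
    exact ⟨hbot, hbot⟩
end

section
/- Let A ∈ ℚ^{m×n}, j ∈ {1,…,n} with I⁻_j(A) ≠ ∅ and I⁺_j(A) ≠ ∅, and let i ∈ I⁻_j(A) ∪ I⁺_j(A). Then the projection matrix F ∈ ℚ^{(m−1)×m} of the restricted projection fmpproj with respect to j and i has linearly independent rows. -/
/-- The projection matrix of a restricted projection has linearly independent rows. -/
theorem projMatrix_rows_linearIndependent {m n : ℕ} (A : Matrix (Fin m) (Fin n) ℚ)
    (j : Fin n) (i : Fin m)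
    (hl : ∃ ℓ, A ℓ j < 0) (hu : ∃ u, 0 < A u j)
    (hi : A i j < 0 ∨ 0 < A i j) :
    LinearIndependent ℚ (fun i' => projMatrix A j i i') := by
  rw [Fintype.linearIndependent_iff]
  intro g hg i'
  have h := congrFun hg i'.1
  simp only [Finset.sum_apply, Pi.smul_apply, smul_eq_mul, Pi.zero_apply] at h
  have h1 : i'.1 ≠ i := i'.2
  rw [Finset.sum_eq_single i'] at h
  · -- entry at own column is nonzero
    rcases lt_trichotomy (A i'.1 j) 0 with hc | hc | hc
    · have : projMatrix A j i i' i'.1 = -(A i'.1 j)⁻¹ := by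
        simp [projMatrix, unitRow, h1, hc]
      rw [this] at h
      have hne : -(A i'.1 j)⁻¹ ≠ 0 := neg_ne_zero.mpr (inv_ne_zero hc.ne)
      exact (mul_eq_zero.mp h).resolve_right hne
    · have : projMatrix A j i i' i'.1 = 1 := by
        simp [projMatrix, unitRow, h1, hc]
      rw [this] at h; linarith
    · have : projMatrix A j i i' i'.1 = (A i'.1 j)⁻¹ := by
        simp [projMatrix, unitRow, h1, hc, not_lt.mpr hc.le]
      rw [this] at h
      have hne : (A i'.1 j)⁻¹ ≠ 0 := inv_ne_zero hc.ne'
      exact (mul_eq_zero.mp h).resolve_right hne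
  · intro i'' _ hne
    have h2 : i'.1 ≠ i''.1 := fun hh => hne (Subtype.ext hh.symm)
    have : projMatrix A j i i'' i'.1 = 0 := by
      simp only [projMatrix, Matrix.of_apply]
      split_ifs <;> simp [unitRow, h1, h2]
    rw [this, mul_zero]
  · intro hmem
    exact absurd (Finset.mem_univ i') hmem
end

section
/- Let A ∈ ℚ^{m×n} and b ∈ ℚ^m, and let K ⊆ {1,…,m} be a minimal unsatisfiable subset of the system A x ≤ b. Then there exists a row vector f ∈ ℚ^{1×m} with f ≥ 0 componentwise, f_i ≠ 0 if and only if i ∈ K, f A = 0 and f b < 0. -/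
open Matrix

/-- The subsystem of `A x ≤ b` induced by `K` is satisfiable over `ℝ^n`. -/
def SatOn {m n : ℕ} (A : Matrix (Fin m) (Fin n) ℚ) (b : Fin m → ℚ)
    (K : Finset (Fin m)) : Prop :=
  ∃ x : Fin n → ℝ, ∀ i ∈ K, ∑ k, (A i k : ℝ) * x k ≤ (b i : ℝ)

/-- `K` is a minimal unsatisfiable subset of `A x ≤ b`. -/
def MinUnsat {m n : ℕ} (A : Matrix (Fin m) (Fin n) ℚ) (b : Fin m → ℚ)
    (K : Finset (Fin m)) : Prop :=
  ¬ SatOn A b K ∧ ∀ K' ⊂ K, SatOn A b K'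

/-- Farkas' lemma over `ℚ`, proved by Fourier–Motzkin elimination (induction on the
number of variables). -/
theorem farkas_aux (n : ℕ) : ∀ (ι : Type) [Fintype ι] (a : ι → Fin n → ℚ) (b : ι → ℚ),
    (¬ ∃ x : Fin n → ℚ, ∀ i, ∑ j, a i j * x j ≤ b i) →
    ∃ f : ι → ℚ, (∀ i, 0 ≤ f i) ∧ (∀ j, ∑ i, f i * a i j = 0) ∧ ∑ i, f i * b i < 0 := by
  induction n with
  | zero =>
    intro ι _ a b hunsat
    classical
    push_neg at hunsat
    obtain ⟨i0, hi0⟩ := hunsat (fun j => 0)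
    have hb : b i0 < 0 := by simpa using hi0
    refine ⟨fun i => if i = i0 then 1 else 0, ?_, ?_, ?_⟩
    · intro i; dsimp only; split <;> norm_num
    · intro j; exact j.elim0
    · simpa [ite_mul, Finset.sum_ite_eq'] using hb
  | succ n ih =>
    intro ι _ a b hunsat
    classical
    set al : ι → ℚ := fun i => a i (Fin.last n) with hal
    -- index type of the eliminated system
    let ι' := {z : ι // al z = 0} ⊕ {p : ι // 0 < al p} × {q : ι // al q < 0}
    -- combination weights
    let w : ι' → ι → ℚ := fun k i =>
      match k with
      | .inl z => if i = z.1 then 1 else 0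
      | .inr (p, q) => (if i = p.1 then -al q.1 else 0) + (if i = q.1 then al p.1 else 0)
    let a' : ι' → Fin n → ℚ := fun k j => ∑ i, w k i * a i j.castSucc
    let b' : ι' → ℚ := fun k => ∑ i, w k i * b i
    have hw0 : ∀ k i, 0 ≤ w k i := by
      rintro (z | ⟨p, q⟩) i
      · simp only [w]; split <;> norm_num
      · have hp := p.2
        have hq := q.2
        simp only [w]
        apply add_nonneg <;> split <;> linarith
    have hwal : ∀ k, ∑ i, w k i * al i = 0 := by
      rintro (z | ⟨p, q⟩)
      · simp [w, ite_mul, Finset.sum_ite_eq', z.2]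
      · simp only [w, add_mul, ite_mul, zero_mul, Finset.sum_add_distrib,
          Finset.sum_ite_eq', Finset.mem_univ, if_pos]
        ring
    have hswap : ∀ (g : ι' → ℚ) (v : ι → ℚ),
        ∑ i, (∑ k, g k * w k i) * v i = ∑ k, g k * ∑ i, w k i * v i := by
      intro g v
      simp_rw [Finset.sum_mul, Finset.mul_sum, mul_assoc]
      exact Finset.sum_comm
    -- the eliminated system is unsatisfiable
    have hunsat' : ¬ ∃ y : Fin n → ℚ, ∀ k, ∑ j, a' k j * y j ≤ b' k := by
      rintro ⟨y, hy⟩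
      set s : ι → ℚ := fun i => ∑ j : Fin n, a i j.castSucc * y j with hs
      have hyk : ∀ k : ι', ∑ i, w k i * s i ≤ b' k := by
        intro k
        calc ∑ i, w k i * s i = ∑ j, a' k j * y j := by
              simp_rw [a', Finset.sum_mul, hs, Finset.mul_sum, ← mul_assoc]
              exact Finset.sum_comm
          _ ≤ b' k := hy k
      have hZ : ∀ z : {z : ι // al z = 0}, s z.1 ≤ b z.1 := by
        intro z
        have h := hyk (.inl z)
        simpa [w, b', ite_mul, Finset.sum_ite_eq'] using h
      have hPN : ∀ (p : {p : ι // 0 < al p}) (q : {q : ι // al q < 0}),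
          (-al q.1) * s p.1 + al p.1 * s q.1 ≤ (-al q.1) * b p.1 + al p.1 * b q.1 := by
        intro p q
        have h := hyk (.inr (p, q))
        simpa [w, b', add_mul, ite_mul, Finset.sum_add_distrib, Finset.sum_ite_eq'] using h
      have hpair : ∀ (p : {p : ι // 0 < al p}) (q : {q : ι // al q < 0}),
          (b q.1 - s q.1) / al q.1 ≤ (b p.1 - s p.1) / al p.1 := by
        intro p q
        have hp := p.2
        have hq := q.2
        rw [div_le_iff_of_neg hq, div_mul_eq_mul_div, div_le_iff₀ hp]
        nlinarith [hPN p q]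
      -- choose value for the last variable
      set TL : Finset ℚ :=
        Finset.univ.image (fun q : {q : ι // al q < 0} => (b q.1 - s q.1) / al q.1) with hTL
      set TU : Finset ℚ :=
        Finset.univ.image (fun p : {p : ι // 0 < al p} => (b p.1 - s p.1) / al p.1) with hTU
      set t : ℚ := if h : TL.Nonempty then TL.max' h
        else if h' : TU.Nonempty then TU.min' h' else 0 with ht
      have ht1 : ∀ q : {q : ι // al q < 0}, (b q.1 - s q.1) / al q.1 ≤ t := by
        intro q
        have hmem : (b q.1 - s q.1) / al q.1 ∈ TL :=
          Finset.mem_image_of_mem _ (Finset.mem_univ q)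
        have hne : TL.Nonempty := ⟨_, hmem⟩
        rw [ht, dif_pos hne]
        exact Finset.le_max' _ _ hmem
      have ht2 : ∀ p : {p : ι // 0 < al p}, t ≤ (b p.1 - s p.1) / al p.1 := by
        intro p
        by_cases hne : TL.Nonempty
        · rw [ht, dif_pos hne]
          obtain ⟨q, -, hq⟩ := Finset.mem_image.1 (TL.max'_mem hne)
          rw [← hq]
          exact hpair p q
        · have hmem : (b p.1 - s p.1) / al p.1 ∈ TU :=
            Finset.mem_image_of_mem _ (Finset.mem_univ p)
          have hne' : TU.Nonempty := ⟨_, hmem⟩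
          rw [ht, dif_neg hne, dif_pos hne']
          exact Finset.min'_le _ _ hmem
      apply hunsat
      refine ⟨Fin.snoc y t, fun i => ?_⟩
      rw [Fin.sum_univ_castSucc]
      simp only [Fin.snoc_castSucc, Fin.snoc_last]
      have hsi : ∑ j : Fin n, a i j.castSucc * y j = s i := rfl
      have hali : a i (Fin.last n) = al i := rfl
      rw [hsi, hali]
      rcases lt_trichotomy (al i) 0 with h | h | h
      · have h1 := ht1 ⟨i, h⟩
        rw [div_le_iff_of_neg h] at h1
        linarith
      · have h1 := hZ ⟨i, h⟩
        rw [h]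
        linarith
      · have h1 := ht2 ⟨i, h⟩
        rw [le_div_iff₀ h] at h1
        linarith
    obtain ⟨g, hg0, hgA, hgb⟩ := ih ι' a' b' hunsat'
    refine ⟨fun i => ∑ k, g k * w k i, ?_, ?_, ?_⟩
    · intro i
      exact Finset.sum_nonneg fun k _ => mul_nonneg (hg0 k) (hw0 k i)
    · intro j
      refine Fin.lastCases ?_ ?_ j
      · rw [hswap g al]
        simp [hwal]
      · intro j
        rw [hswap g (fun i => a i j.castSucc)]
        exact hgA j
    · rw [hswap g b]
      exact hgb

/-- For a minimal unsatisfiable subset `K` there is a nonnegative rational row vector `f`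
whose support is exactly `K`, with `f A = 0` and `f b < 0`. -/
theorem minimal_unsat_farkas_certificate {m n : ℕ} (A : Matrix (Fin m) (Fin n) ℚ)
    (b : Fin m → ℚ) (K : Finset (Fin m)) (hK : MinUnsat A b K) :
    ∃ f : Fin m → ℚ, (∀ i, 0 ≤ f i) ∧ (∀ i, f i ≠ 0 ↔ i ∈ K) ∧
      Matrix.vecMul f A = 0 ∧ f ⬝ᵥ b < 0 := by
  classical
  -- no rational solution on K
  have hq : ¬ ∃ x : Fin n → ℚ, ∀ i : {i : Fin m // i ∈ K}, ∑ j, A i.1 j * x j ≤ b i.1 := by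
    rintro ⟨x, hx⟩
    apply hK.1
    refine ⟨fun k => (x k : ℝ), fun i hi => ?_⟩
    have h := hx ⟨i, hi⟩
    calc ∑ k, (A i k : ℝ) * (x k : ℝ) = ((∑ k, A i k * x k : ℚ) : ℝ) := by push_cast; ring
      _ ≤ (b i : ℝ) := by exact_mod_cast h
  obtain ⟨g, hg0, hgA, hgb⟩ := farkas_aux n {i : Fin m // i ∈ K}
    (fun i j => A i.1 j) (fun i => b i.1) hq
  set f : Fin m → ℚ := fun i => if h : i ∈ K then g ⟨i, h⟩ else 0 with hf
  have hf0 : ∀ i, 0 ≤ f i := by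
    intro i
    simp only [hf]
    split
    exacts [hg0 _, le_rfl]
  -- sums over f reduce to sums over the subtype
  have hsum : ∀ v : Fin m → ℚ, ∑ i, f i * v i = ∑ z : {i : Fin m // i ∈ K}, g z * v z.1 := by
    intro v
    have e1 : ∑ i ∈ K, f i * v i = ∑ i, f i * v i :=
      Finset.sum_subset K.subset_univ (fun x _ hx => by simp [hf, dif_neg hx])
    rw [← e1, ← Finset.sum_coe_sort K (fun i => f i * v i)]
    apply Finset.sum_congr rfl
    intro z _
    simp [hf, dif_pos z.2]
  have hfA : Matrix.vecMul f A = 0 := by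
    funext j
    show ∑ i, f i * A i j = 0
    rw [hsum (fun i => A i j)]
    exact hgA j
  have hfb : f ⬝ᵥ b < 0 := by
    show ∑ i, f i * b i < 0
    rw [hsum b]
    exact hgb
  refine ⟨f, hf0, ?_, hfA, hfb⟩
  intro i
  constructor
  · intro hne
    by_contra hiK
    exact hne (by simp [hf, dif_neg hiK])
  · intro hiK h0
    -- erase i is satisfiable; derive a contradiction
    obtain ⟨x, hx⟩ := hK.2 (K.erase i) (Finset.erase_ssubset hiK)
    have key : ∀ j, 0 ≤ (f j : ℝ) * ((b j : ℝ) - ∑ k, (A j k : ℝ) * x k) := by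
      intro j
      by_cases hjK : j ∈ K
      · by_cases hji : j = i
        · subst hji
          rw [show (f j : ℝ) = 0 by exact_mod_cast h0]
          simp
        · have hje : j ∈ K.erase i := Finset.mem_erase.2 ⟨hji, hjK⟩
          exact mul_nonneg (by exact_mod_cast hf0 j) (by linarith [hx j hje])
      · have : f j = 0 := by simp [hf, dif_neg hjK]
        rw [show (f j : ℝ) = 0 by exact_mod_cast this]
        simp
    have hAcol : ∀ k, ∑ j, (f j : ℝ) * (A j k : ℝ) = 0 := by
      intro k
      have h := congrFun hfA k
      have h' : ∑ j, f j * A j k = 0 := h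
      exact_mod_cast h'
    have hfbR : ∑ j, (f j : ℝ) * (b j : ℝ) < 0 := by
      have h' : ∑ j, f j * b j < 0 := hfb
      exact_mod_cast h'
    have h1 : (0 : ℝ) ≤ ∑ j, (f j : ℝ) * ((b j : ℝ) - ∑ k, (A j k : ℝ) * x k) :=
      Finset.sum_nonneg fun j _ => key j
    have h2 : ∑ j, (f j : ℝ) * ((b j : ℝ) - ∑ k, (A j k : ℝ) * x k)
        = (∑ j, (f j : ℝ) * (b j : ℝ)) - ∑ k, (∑ j, (f j : ℝ) * (A j k : ℝ)) * x k := by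
      simp_rw [mul_sub, Finset.sum_sub_distrib]
      congr 1
      simp_rw [Finset.mul_sum, Finset.sum_mul, mul_assoc]
      exact Finset.sum_comm
    rw [h2] at h1
    simp only [hAcol, zero_mul, Finset.sum_const_zero, sub_zero] at h1
    linarith
end

section
/- Let A ∈ ℚ^{m×n} and b ∈ ℚ^m, and let K ⊆ {1,…,m} be a minimal unsatisfiable subset of the system A x ≤ b. If f ∈ ℚ^{1×m} is a row vector with f_{i'} = 0 for all i' ∉ K, f A = 0 and f b < 0, then f ≥ 0 componentwise. -/
open Matrix

open Finset
theorem farkasAux (n : ℕ) : ∀ (ι : Type) [Fintype ι] (A : ι → Fin n → ℝ) (b : ι → ℝ),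
    (¬ ∃ x : Fin n → ℝ, ∀ i, ∑ k, A i k * x k ≤ b i) →
    ∃ y : ι → ℝ, (∀ i, 0 ≤ y i) ∧ (∀ k, ∑ i, y i * A i k = 0) ∧ ∑ i, y i * b i < 0 := by
  induction n with
  | zero =>
    intro ι _ A b h
    classical
    push_neg at h
    obtain ⟨i, hi⟩ := h 0
    refine ⟨fun j => if j = i then 1 else 0, ?_, ?_, ?_⟩
    · intro j; dsimp; split <;> norm_num
    · exact fun k => absurd k.2 (by omega)
    · simp only [ite_mul, one_mul, zero_mul, Finset.sum_ite_eq', mem_univ, if_true]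
      simpa using hi
  | succ n ih =>
    intro ι _ A b h
    classical
    set c : ι → ℝ := fun i => A i 0 with hc
    set T : (ι → ℝ) → (ι ⊕ ι × ι) → ℝ := fun w =>
      Sum.elim (fun i => if c i = 0 then w i else 0)
        (fun pq => if 0 < c pq.1 ∧ c pq.2 < 0 then (-(c pq.2)) * w pq.1 + c pq.1 * w pq.2 else 0)
      with hT
    have hnew : ¬ ∃ x' : Fin n → ℝ, ∀ j, ∑ k, T (fun i => A i k.succ) j * x' k ≤ T b j := by
      rintro ⟨x', hx'⟩
      apply h
      set t : ι → ℝ := fun i => ∑ k, A i k.succ * x' k with ht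
      have hZ : ∀ i, c i = 0 → t i ≤ b i := by
        intro i hci
        have h1 := hx' (Sum.inl i)
        simpa [hT, hci, ht] using h1
      have hPQ : ∀ p q, 0 < c p → c q < 0 →
          (-(c q)) * t p + c p * t q ≤ (-(c q)) * b p + c p * b q := by
        intro p q hp hq
        have h1 := hx' (Sum.inr (p, q))
        simp only [hT, Sum.elim_inr, if_pos (And.intro hp hq)] at h1
        calc (-(c q)) * t p + c p * t q
            = ∑ k, ((-(c q)) * A p k.succ + c p * A q k.succ) * x' k := by
              simp only [ht, add_mul, Finset.sum_add_distrib, mul_assoc, ← Finset.mul_sum]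
          _ ≤ (-(c q)) * b p + c p * b q := h1
      set L : Finset ℝ := (univ.filter (fun q => c q < 0)).image (fun q => (b q - t q) / c q) with hL
      set U : Finset ℝ := (univ.filter (fun p => 0 < c p)).image (fun p => (b p - t p) / c p) with hU
      have key : ∀ l ∈ L, ∀ u ∈ U, l ≤ u := by
        intro l hl u hu
        simp only [hL, hU, mem_image, mem_filter, mem_univ, true_and] at hl hu
        obtain ⟨q, hq, rfl⟩ := hl
        obtain ⟨p, hp, rfl⟩ := hu
        have h1 := hPQ p q hp hq
        have e1 : (b q - t q) / c q = (t q - b q) / (-(c q)) := by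
          rw [← neg_div_neg_eq]; ring_nf
        rw [e1, div_le_div_iff₀ (by linarith) hp]
        nlinarith
      have hbound : ∃ x₀ : ℝ, (∀ l ∈ L, l ≤ x₀) ∧ (∀ u ∈ U, x₀ ≤ u) := by
        by_cases hLne : L.Nonempty
        · exact ⟨L.max' hLne, fun l hl => L.le_max' l hl,
            fun u hu => Finset.max'_le _ _ _ (fun l hl => key l hl u hu)⟩
        · by_cases hUne : U.Nonempty
          · exact ⟨U.min' hUne, fun l hl => absurd ⟨l, hl⟩ hLne,
              fun u hu => Finset.min'_le _ _ hu⟩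
          · exact ⟨0, fun l hl => absurd ⟨l, hl⟩ hLne, fun u hu => absurd ⟨u, hu⟩ hUne⟩
      obtain ⟨x₀, hlow, hup⟩ := hbound
      refine ⟨Fin.cons x₀ x', fun i => ?_⟩
      have hsum : ∑ k, A i k * (Fin.cons x₀ x' : Fin (n+1) → ℝ) k = c i * x₀ + t i := by
        rw [Fin.sum_univ_succ]
        simp [ht, hc]
      rw [hsum]
      rcases lt_trichotomy (c i) 0 with hci | hci | hci
      · have hmem : (b i - t i) / c i ∈ L := by
          simp only [hL, mem_image, mem_filter, mem_univ, true_and]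
          exact ⟨i, hci, rfl⟩
        have h2 := hlow _ hmem
        have h3 := (div_le_iff_of_neg hci).mp h2
        linarith
      · have := hZ i hci
        rw [hci]
        linarith
      · have hmem : (b i - t i) / c i ∈ U := by
          simp only [hU, mem_image, mem_filter, mem_univ, true_and]
          exact ⟨i, hci, rfl⟩
        have h2 := hup _ hmem
        have h3 := (le_div_iff₀ hci).mp h2
        linarith
    obtain ⟨y', hy'0, hy'A, hy'b⟩ := ih (ι ⊕ ι × ι) (fun j k => T (fun i => A i k.succ) j) (T b) hnew
    set y : ι → ℝ := fun i =>
      (if c i = 0 then y' (Sum.inl i) else 0)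
      + (∑ q, if 0 < c i ∧ c q < 0 then y' (Sum.inr (i, q)) * (-(c q)) else 0)
      + (∑ p, if 0 < c p ∧ c i < 0 then y' (Sum.inr (p, i)) * c p else 0) with hy
    have master : ∀ w : ι → ℝ, ∑ i, y i * w i = ∑ j, y' j * T w j := by
      intro w
      have e1 : ∑ i, y i * w i
          = (∑ i, if c i = 0 then y' (Sum.inl i) * w i else 0)
          + (∑ i, ∑ q, if 0 < c i ∧ c q < 0 then y' (Sum.inr (i, q)) * (-(c q) * w i) else 0)
          + (∑ i, ∑ p, if 0 < c p ∧ c i < 0 then y' (Sum.inr (p, i)) * (c p * w i) else 0) := by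
        simp only [hy, add_mul, Finset.sum_mul, ite_mul, zero_mul, mul_assoc,
          Finset.sum_add_distrib]
      have e2 : (∑ i, ∑ p, if 0 < c p ∧ c i < 0 then y' (Sum.inr (p, i)) * (c p * w i) else 0)
          = ∑ p, ∑ q, if 0 < c p ∧ c q < 0 then y' (Sum.inr (p, q)) * (c p * w q) else 0 :=
        Finset.sum_comm
      have e3 : ∑ j, y' j * T w j
          = (∑ i, if c i = 0 then y' (Sum.inl i) * w i else 0)
          + (∑ p, ∑ q, ((if 0 < c p ∧ c q < 0 then y' (Sum.inr (p, q)) * (-(c q) * w p) else 0)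
              + (if 0 < c p ∧ c q < 0 then y' (Sum.inr (p, q)) * (c p * w q) else 0))) := by
        rw [Fintype.sum_sum_type, Fintype.sum_prod_type, hT]
        congr 1
        · exact Finset.sum_congr rfl fun i _ => by simp only [Sum.elim_inl]; split_ifs <;> ring
        · exact Finset.sum_congr rfl fun p _ => Finset.sum_congr rfl fun q _ => by
            simp only [Sum.elim_inr]; split_ifs <;> ring
      have e5 : (∑ p, ∑ q, ((if 0 < c p ∧ c q < 0 then y' (Sum.inr (p, q)) * (-(c q) * w p) else 0)
              + (if 0 < c p ∧ c q < 0 then y' (Sum.inr (p, q)) * (c p * w q) else 0)))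
          = (∑ p, ∑ q, (if 0 < c p ∧ c q < 0 then y' (Sum.inr (p, q)) * (-(c q) * w p) else 0))
          + (∑ p, ∑ q, (if 0 < c p ∧ c q < 0 then y' (Sum.inr (p, q)) * (c p * w q) else 0)) := by
        rw [← Finset.sum_add_distrib]
        exact Finset.sum_congr rfl fun p _ => Finset.sum_add_distrib
      rw [e1, e2, e3, e5]
      ring
    refine ⟨y, ?_, ?_, ?_⟩
    · intro i
      simp only [hy]
      have h1 : (0:ℝ) ≤ if c i = 0 then y' (Sum.inl i) else 0 := by
        split_ifs; exacts [hy'0 _, le_refl 0]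
      have h2 : (0:ℝ) ≤ ∑ q, if 0 < c i ∧ c q < 0 then y' (Sum.inr (i, q)) * (-(c q)) else 0 := by
        refine Finset.sum_nonneg fun q _ => ?_
        split_ifs with hq
        · exact mul_nonneg (hy'0 _) (by linarith [hq.2])
        · exact le_refl 0
      have h3 : (0:ℝ) ≤ ∑ p, if 0 < c p ∧ c i < 0 then y' (Sum.inr (p, i)) * c p else 0 := by
        refine Finset.sum_nonneg fun p _ => ?_
        split_ifs with hp
        · exact mul_nonneg (hy'0 _) (le_of_lt hp.1)
        · exact le_refl 0
      linarith
    · intro k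
      refine Fin.cases ?_ ?_ k
      · rw [show ∑ i, y i * A i 0 = ∑ i, y i * c i from by simp [hc], master c]
        refine Finset.sum_eq_zero fun j _ => ?_
        rcases j with i | ⟨p, q⟩
        · simp only [hT, Sum.elim_inl]
          split_ifs with hci
          · rw [hci, mul_zero]
          · rw [mul_zero]
        · simp only [hT, Sum.elim_inr]
          split_ifs
          · ring_nf
          · rw [mul_zero]
      · intro k'
        rw [master (fun i => A i k'.succ)]
        exact hy'A k'
    · rw [master b]; exact hy'b

open Matrix


theorem certUnsat {m n : ℕ} (A : Matrix (Fin m) (Fin n) ℚ) (b : Fin m → ℚ)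
    (S : Finset (Fin m)) (y : Fin m → ℝ) (hy0 : ∀ i, 0 ≤ y i)
    (hsupp : ∀ i ∉ S, y i = 0)
    (hA : ∀ k, ∑ i, y i * (A i k : ℝ) = 0)
    (hb : ∑ i, y i * (b i : ℝ) < 0) : ¬ SatOn A b S := by
  rintro ⟨x, hx⟩
  have h1 : ∑ i, y i * (∑ k, (A i k : ℝ) * x k) ≤ ∑ i, y i * (b i : ℝ) := by
    refine Finset.sum_le_sum fun i _ => ?_
    by_cases hi : i ∈ S
    · exact mul_le_mul_of_nonneg_left (hx i hi) (hy0 i)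
    · rw [hsupp i hi]; simp
  have h2 : ∑ i, y i * (∑ k, (A i k : ℝ) * x k) = 0 := by
    calc ∑ i, y i * ∑ k, (A i k : ℝ) * x k
        = ∑ i, ∑ k, y i * (A i k : ℝ) * x k := by
          refine Finset.sum_congr rfl fun i _ => ?_
          rw [Finset.mul_sum]
          exact Finset.sum_congr rfl fun k _ => by ring
      _ = ∑ k, ∑ i, y i * (A i k : ℝ) * x k := Finset.sum_comm
      _ = ∑ k, (∑ i, y i * (A i k : ℝ)) * x k := by
          exact Finset.sum_congr rfl fun k _ => (Finset.sum_mul _ _ _).symm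
      _ = 0 := by simp [hA]
  linarith

/-- Any rational row vector `f` supported on a minimal unsatisfiable subset `K` with
`f A = 0` and `f b < 0` is automatically nonnegative. -/
theorem minimal_unsat_certificate_nonneg {m n : ℕ} (A : Matrix (Fin m) (Fin n) ℚ)
    (b : Fin m → ℚ) (K : Finset (Fin m)) (hK : MinUnsat A b K)
    (f : Fin m → ℚ) (hsupp : ∀ i ∉ K, f i = 0)
    (hfA : Matrix.vecMul f A = 0) (hfb : f ⬝ᵥ b < 0) :
    ∀ i, 0 ≤ f i := by
  classical
  obtain ⟨hKunsat, hKmin⟩ := hK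
  have hsub : ¬ ∃ x : Fin n → ℝ, ∀ i : {i // i ∈ K},
      ∑ k, ((A i.1 k : ℝ)) * x k ≤ (b i.1 : ℝ) := by
    rintro ⟨x, hx⟩
    exact hKunsat ⟨x, fun i hi => hx ⟨i, hi⟩⟩
  obtain ⟨y₀, hy₀0, hy₀A, hy₀b⟩ := farkasAux n {i // i ∈ K}
    (fun i k => (A i.1 k : ℝ)) (fun i => (b i.1 : ℝ)) hsub
  set y : Fin m → ℝ := fun i => if h : i ∈ K then y₀ ⟨i, h⟩ else 0 with hy
  have hy0 : ∀ i, 0 ≤ y i := by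
    intro i; rw [hy]; dsimp only; split
    · exact hy₀0 _
    · exact le_refl 0
  have hysupp : ∀ i ∉ K, y i = 0 := fun i hi => by simp [hy, dif_neg hi]
  have hsumy : ∀ w : Fin m → ℝ, ∑ i, y i * w i = ∑ i : {i // i ∈ K}, y₀ i * w i.1 := by
    intro w
    rw [← Finset.sum_subset (Finset.subset_univ K)
      (fun x _ hx => by rw [hysupp x hx, zero_mul])]
    rw [← Finset.sum_coe_sort K (fun i => y i * w i)]
    refine Finset.sum_congr rfl fun i _ => ?_
    rw [hy]; dsimp only; rw [dif_pos i.2]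
  have hyA : ∀ k, ∑ i, y i * (A i k : ℝ) = 0 := fun k => by
    rw [hsumy (fun i => (A i k : ℝ))]; exact hy₀A k
  have hyb : ∑ i, y i * (b i : ℝ) < 0 := by
    rw [hsumy (fun i => (b i : ℝ))]; exact hy₀b
  have hypos : ∀ j ∈ K, 0 < y j := by
    intro j hj
    rcases lt_or_eq_of_le (hy0 j) with h | h
    · exact h
    · exfalso
      have hzero : ∀ i ∉ K.erase j, y i = 0 := by
        intro i hi
        by_cases hij : i = j
        · subst hij; exact h.symm
        · exact hysupp i (fun hiK => hi (Finset.mem_erase.mpr ⟨hij, hiK⟩))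
      exact certUnsat A b (K.erase j) y hy0 hzero hyA hyb
        (hKmin _ (Finset.erase_ssubset hj))
  intro i₀
  by_contra hneg
  push_neg at hneg
  set F : Fin m → ℝ := fun i => (f i : ℝ) with hF
  set Nf : Finset (Fin m) := Finset.univ.filter (fun j => f j < 0) with hNf
  have hNfne : Nf.Nonempty := ⟨i₀, by simp [hNf, hneg]⟩
  have hNfK : ∀ j ∈ Nf, j ∈ K := by
    intro j hj
    by_contra hjK
    have h1 := hsupp j hjK
    rw [hNf, Finset.mem_filter] at hj
    linarith [hj.2]
  have hFneg : ∀ j ∈ Nf, F j < 0 := by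
    intro j hj
    rw [hNf, Finset.mem_filter] at hj
    simp only [hF]; exact_mod_cast hj.2
  have hden : ∀ j ∈ Nf, 0 < y j - F j := fun j hj => by
    have h1 := hypos j (hNfK j hj)
    have h2 := hFneg j hj
    linarith
  set t : ℝ := Nf.inf' hNfne (fun j => y j / (y j - F j)) with htd
  obtain ⟨j₀, hj₀Nf, hj₀⟩ := Finset.exists_mem_eq_inf' hNfne (fun j => y j / (y j - F j))
  have hj₀K : j₀ ∈ K := hNfK _ hj₀Nf
  have htpos : 0 < t := by
    rw [htd, Finset.lt_inf'_iff]
    intro j hj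
    exact div_pos (hypos j (hNfK j hj)) (hden j hj)
  have htle1 : t ≤ 1 := by
    rw [htd]
    refine le_trans (Finset.inf'_le _ hj₀Nf) ?_
    rw [div_le_one (hden j₀ hj₀Nf)]
    linarith [hFneg j₀ hj₀Nf]
  have htle : ∀ j ∈ Nf, t * (y j - F j) ≤ y j := by
    intro j hj
    have h1 : t ≤ y j / (y j - F j) := htd ▸ Finset.inf'_le _ hj
    calc t * (y j - F j) ≤ (y j / (y j - F j)) * (y j - F j) :=
          mul_le_mul_of_nonneg_right h1 (hden j hj).le
      _ = y j := div_mul_cancel₀ _ (hden j hj).ne'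
  set z : Fin m → ℝ := fun i => (1 - t) * y i + t * F i with hz
  have hz0 : ∀ i, 0 ≤ z i := by
    intro i
    rw [hz]; dsimp only
    by_cases hi : f i < 0
    · have hiNf : i ∈ Nf := by rw [hNf, Finset.mem_filter]; exact ⟨Finset.mem_univ i, hi⟩
      have h1 := htle i hiNf
      nlinarith [h1]
    · push_neg at hi
      have hFi : (0:ℝ) ≤ F i := by simp only [hF]; exact_mod_cast hi
      nlinarith [mul_nonneg (by linarith : (0:ℝ) ≤ 1 - t) (hy0 i), mul_nonneg htpos.le hFi]
  have htj₀ : t * (y j₀ - F j₀) = y j₀ := by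
    have : t = y j₀ / (y j₀ - F j₀) := by rw [htd, hj₀]
    rw [this, div_mul_cancel₀ _ (hden j₀ hj₀Nf).ne']
  have hzsupp : ∀ i ∉ K.erase j₀, z i = 0 := by
    intro i hi
    by_cases hij : i = j₀
    · subst hij
      rw [hz]; dsimp only
      linarith [htj₀]
    · have hiK : i ∉ K := fun hiK => hi (Finset.mem_erase.mpr ⟨hij, hiK⟩)
      have h1 := hysupp i hiK
      have h2 : F i = 0 := by simp only [hF]; exact_mod_cast hsupp i hiK
      rw [hz]; dsimp only; rw [h1, h2]; ring
  have hFA : ∀ k, ∑ i, F i * (A i k : ℝ) = 0 := by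
    intro k
    have h1 := congrFun hfA k
    rw [Matrix.vecMul, dotProduct] at h1
    have h2 : ((∑ i, f i * A i k : ℚ) : ℝ) = 0 := by exact_mod_cast h1
    rw [← h2]
    push_cast
    rfl
  have hFb : ∑ i, F i * (b i : ℝ) < 0 := by
    rw [dotProduct] at hfb
    have h2 : ((∑ i, f i * b i : ℚ) : ℝ) < 0 := by exact_mod_cast hfb
    calc ∑ i, F i * (b i : ℝ) = ((∑ i, f i * b i : ℚ) : ℝ) := by push_cast; rfl
      _ < 0 := h2
  have hzA : ∀ k, ∑ i, z i * (A i k : ℝ) = 0 := by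
    intro k
    calc ∑ i, z i * (A i k : ℝ)
        = (1 - t) * ∑ i, y i * (A i k : ℝ) + t * ∑ i, F i * (A i k : ℝ) := by
          rw [Finset.mul_sum, Finset.mul_sum, ← Finset.sum_add_distrib]
          refine Finset.sum_congr rfl fun i _ => ?_
          rw [hz]; dsimp only; ring
      _ = 0 := by rw [hyA k, hFA k]; ring
  have hzb : ∑ i, z i * (b i : ℝ) < 0 := by
    have hcalc : ∑ i, z i * (b i : ℝ)
        = (1 - t) * ∑ i, y i * (b i : ℝ) + t * ∑ i, F i * (b i : ℝ) := by
      rw [Finset.mul_sum, Finset.mul_sum, ← Finset.sum_add_distrib]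
      refine Finset.sum_congr rfl fun i _ => ?_
      rw [hz]; dsimp only; ring
    rw [hcalc]
    have h1 : (1 - t) * ∑ i, y i * (b i : ℝ) ≤ 0 :=
      mul_nonpos_of_nonneg_of_nonpos (by linarith) hyb.le
    have h2 : t * ∑ i, F i * (b i : ℝ) < 0 := mul_neg_of_pos_of_neg htpos hFb
    linarith
  exact certUnsat A b (K.erase j₀) z hz0 hzsupp hzA hzb
    (hKmin _ (Finset.erase_ssubset hj₀K))
end

section
/- Let A ∈ ℚ^{m×n} and b ∈ ℚ^m, let K ⊆ {1,…,m} be a minimal unsatisfiable subset of the system A x ≤ b, and let j ∈ {1,…,n}. If there exists i ∈ K with A_{i,j} ≠ 0, then there exist ℓ ∈ K with A_{ℓ,j} < 0 and u ∈ K with A_{u,j} > 0. -/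
lemma satOn_of_nonneg {m n : ℕ} (A : Matrix (Fin m) (Fin n) ℚ) (b : Fin m → ℚ)
    (K : Finset (Fin m)) (j : Fin n) (i : Fin m) (_hiK : i ∈ K)
    (hi : 0 < A i j) (hpos : ∀ r ∈ K, 0 ≤ A r j)
    (hx : SatOn A b (K.erase i)) : SatOn A b K := by
  obtain ⟨x, hx⟩ := hx
  set S : ℝ := ∑ k ∈ Finset.univ.erase j, (A i k : ℝ) * x k with hS
  have hij : (0:ℝ) < (A i j : ℝ) := by exact_mod_cast hi
  set t : ℝ := min (x j) (((b i : ℝ) - S) / (A i j)) with ht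
  refine ⟨Function.update x j t, ?_⟩
  intro r hrK
  have hsum : ∀ z : Fin n → ℝ, ∑ k, (A r k : ℝ) * z k
      = (A r j : ℝ) * z j + ∑ k ∈ Finset.univ.erase j, (A r k : ℝ) * z k := by
    intro z
    exact (Finset.add_sum_erase _ _ (Finset.mem_univ j)).symm
  have hupd : ∑ k ∈ Finset.univ.erase j, (A r k : ℝ) * (Function.update x j t) k
      = ∑ k ∈ Finset.univ.erase j, (A r k : ℝ) * x k := by
    refine Finset.sum_congr rfl fun k hk => ?_
    rw [Function.update_of_ne (Finset.ne_of_mem_erase hk)]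
  rw [hsum, hupd, Function.update_self]
  by_cases hri : r = i
  · subst hri
    have h1 : (A r j : ℝ) * t ≤ (b r : ℝ) - S := by
      have hle := min_le_right (x j) (((b r : ℝ) - S) / (A r j))
      calc (A r j : ℝ) * t ≤ (A r j : ℝ) * (((b r : ℝ) - S) / (A r j)) :=
            mul_le_mul_of_nonneg_left hle (le_of_lt hij)
        _ = (b r : ℝ) - S := mul_div_cancel₀ _ (ne_of_gt hij)
    linarith
  · have hr0 : (0:ℝ) ≤ (A r j : ℝ) := by exact_mod_cast hpos r hrK
    have hxr := hx r (Finset.mem_erase.mpr ⟨hri, hrK⟩)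
    rw [hsum x] at hxr
    have ht' : (A r j : ℝ) * t ≤ (A r j : ℝ) * x j :=
      mul_le_mul_of_nonneg_left (min_le_left _ _) hr0
    linarith

lemma satOn_of_nonpos {m n : ℕ} (A : Matrix (Fin m) (Fin n) ℚ) (b : Fin m → ℚ)
    (K : Finset (Fin m)) (j : Fin n) (i : Fin m) (_hiK : i ∈ K)
    (hi : A i j < 0) (hneg : ∀ r ∈ K, A r j ≤ 0)
    (hx : SatOn A b (K.erase i)) : SatOn A b K := by
  obtain ⟨x, hx⟩ := hx
  set S : ℝ := ∑ k ∈ Finset.univ.erase j, (A i k : ℝ) * x k with hS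
  have hij : (A i j : ℝ) < 0 := by exact_mod_cast hi
  set t : ℝ := max (x j) (((b i : ℝ) - S) / (A i j)) with ht
  refine ⟨Function.update x j t, ?_⟩
  intro r hrK
  have hsum : ∀ z : Fin n → ℝ, ∑ k, (A r k : ℝ) * z k
      = (A r j : ℝ) * z j + ∑ k ∈ Finset.univ.erase j, (A r k : ℝ) * z k := by
    intro z
    exact (Finset.add_sum_erase _ _ (Finset.mem_univ j)).symm
  have hupd : ∑ k ∈ Finset.univ.erase j, (A r k : ℝ) * (Function.update x j t) k
      = ∑ k ∈ Finset.univ.erase j, (A r k : ℝ) * x k := by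
    refine Finset.sum_congr rfl fun k hk => ?_
    rw [Function.update_of_ne (Finset.ne_of_mem_erase hk)]
  rw [hsum, hupd, Function.update_self]
  by_cases hri : r = i
  · subst hri
    have h1 : (A r j : ℝ) * t ≤ (b r : ℝ) - S := by
      have hle := le_max_right (x j) (((b r : ℝ) - S) / (A r j))
      calc (A r j : ℝ) * t ≤ (A r j : ℝ) * (((b r : ℝ) - S) / (A r j)) :=
            mul_le_mul_of_nonpos_left hle (le_of_lt hij)
        _ = (b r : ℝ) - S := mul_div_cancel₀ _ (ne_of_lt hij)
    linarith
  · have hr0 : (A r j : ℝ) ≤ 0 := by exact_mod_cast hneg r hrK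
    have hxr := hx r (Finset.mem_erase.mpr ⟨hri, hrK⟩)
    rw [hsum x] at hxr
    have ht' : (A r j : ℝ) * t ≤ (A r j : ℝ) * x j :=
      mul_le_mul_of_nonpos_left (le_max_left _ _) hr0
    linarith

/-- If a minimal unsatisfiable subset `K` contains a row with nonzero coefficient at
`x_j`, then `K` contains both a lower bound (`A_{ℓ,j} < 0`) and an upper bound
(`A_{u,j} > 0`) on `x_j`. -/
theorem minimal_unsat_lower_and_upper {m n : ℕ} (A : Matrix (Fin m) (Fin n) ℚ)
    (b : Fin m → ℚ) (K : Finset (Fin m)) (hK : MinUnsat A b K) (j : Fin n)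
    (h : ∃ i ∈ K, A i j ≠ 0) :
    (∃ ℓ ∈ K, A ℓ j < 0) ∧ (∃ u ∈ K, 0 < A u j) := by
  obtain ⟨i, hiK, hij⟩ := h
  constructor
  · by_contra hc
    push_neg at hc
    have hi : 0 < A i j := lt_of_le_of_ne (hc i hiK) (Ne.symm hij)
    have hsub : K.erase i ⊂ K := Finset.erase_ssubset hiK
    exact hK.1 (satOn_of_nonneg A b K j i hiK hi hc (hK.2 _ hsub))
  · by_contra hc
    push_neg at hc
    have hi : A i j < 0 := lt_of_le_of_ne (hc i hiK) hij
    have hsub : K.erase i ⊂ K := Finset.erase_ssubset hiK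
    exact hK.1 (satOn_of_nonpos A b K j i hiK hi hc (hK.2 _ hsub))
end

section
/- Let A ∈ ℚ^{m×n}, b ∈ ℚ^m and j ∈ {1,…,n} with I⁻_j(A) ≠ ∅ and I⁺_j(A) ≠ ∅, and let i ∈ I⁻_j(A) ∪ I⁺_j(A). If x ∈ ℝ^n satisfies the restricted projection fmpproj(A,b,j,i), then the vector x[j := r] with r = (1/A_{i,j})·(b_i − ∑_{k ≠ j} A_{i,k} x_k) satisfies A x ≤ b. -/
/-- If `x` satisfies the restricted projection `fmpproj(A,b,j,i)`, then replacing the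
`j`-th coordinate of `x` by the value `r = (1/A_{i,j})·(b_i − ∑_{k ≠ j} A_{i,k} x_k)`
of the designated bound yields a solution of `A x ≤ b`. -/
theorem restricted_projection_extend {m n : ℕ} (A : Matrix (Fin m) (Fin n) ℚ)
    (b : Fin m → ℚ) (j : Fin n)
    (hl : ∃ ℓ, A ℓ j < 0) (hu : ∃ u, 0 < A u j)
    (i : Fin m) (hi : A i j < 0 ∨ 0 < A i j)
    (x : Fin n → ℝ) (hx : SatProj A b j i x) :
    SatSys A b (Function.update x j
      (((A i j : ℝ))⁻¹ * ((b i : ℝ) - ∑ k ∈ Finset.univ.erase j, (A i k : ℝ) * x k))) := by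

  classical
  intro p
  set r : ℝ := ((A i j : ℝ))⁻¹ * ((b i : ℝ) - ∑ k ∈ Finset.univ.erase j, (A i k : ℝ) * x k) with hr
  have hAij : (A i j : ℝ) ≠ 0 := by
    rcases hi with h | h
    · exact ne_of_lt (by exact_mod_cast h)
    · exact ne_of_gt (by exact_mod_cast h)
  have hupd : ∑ k, (A p k : ℝ) * Function.update x j r k
      = (A p j : ℝ) * r + ∑ k ∈ Finset.univ.erase j, (A p k : ℝ) * x k := by
    rw [← Finset.add_sum_erase _ _ (Finset.mem_univ j), Function.update_self]
    congr 1
    refine Finset.sum_congr rfl fun k hk => ?_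
    rw [Function.update_of_ne (Finset.ne_of_mem_erase hk)]
  rw [hupd]
  have hsplit : ∀ q : Fin m, ∑ k, (A q k : ℝ) * x k
      = (A q j : ℝ) * x j + ∑ k ∈ Finset.univ.erase j, (A q k : ℝ) * x k := by
    intro q
    rw [← Finset.add_sum_erase _ _ (Finset.mem_univ j)]
  by_cases hp : p = i
  · subst hp
    rw [hr, mul_inv_cancel_left₀ hAij]
    simp
  · have hcon := hx ⟨p, hp⟩
    rcases lt_trichotomy (A p j) 0 with hpj | hpj | hpj
    · have hApj : (A p j : ℝ) < 0 := by exact_mod_cast hpj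
      have hFA : ∀ k, (projMatrix A j i * A) ⟨p, hp⟩ k
          = (A i j)⁻¹ * A i k - (A p j)⁻¹ * A p k := by
        intro k
        simp [projMatrix, Matrix.mul_apply, unitRow, hpj, sub_mul, ite_mul,
          Finset.sum_sub_distrib, Finset.sum_ite_eq']
      have hFb : (projMatrix A j i).mulVec b ⟨p, hp⟩
          = (A i j)⁻¹ * b i - (A p j)⁻¹ * b p := by
        simp [projMatrix, Matrix.mulVec, dotProduct, unitRow, hpj, sub_mul, ite_mul,
          Finset.sum_sub_distrib, Finset.sum_ite_eq']
      have h1 : (A i j : ℝ)⁻¹ * (∑ k, (A i k : ℝ) * x k)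
            - (A p j : ℝ)⁻¹ * (∑ k, (A p k : ℝ) * x k)
          ≤ (A i j : ℝ)⁻¹ * (b i : ℝ) - (A p j : ℝ)⁻¹ * (b p : ℝ) := by
        have h := hcon
        simp only [SatProj, SatSys, hFA, hFb] at h
        push_cast at h
        simpa [sub_mul, Finset.sum_sub_distrib, mul_assoc, Finset.mul_sum] using h
      rw [hsplit i, hsplit p, mul_add, mul_add, ← mul_assoc, ← mul_assoc,
        inv_mul_cancel₀ hAij, inv_mul_cancel₀ (ne_of_lt hApj)] at h1
      have h2 : (A p j : ℝ)⁻¹ * ((b p : ℝ) - ∑ k ∈ Finset.univ.erase j, (A p k : ℝ) * x k)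
          ≤ r := by
        rw [hr]
        ring_nf
        ring_nf at h1
        linarith
      have h3 := mul_le_mul_of_nonpos_left h2 (le_of_lt hApj)
      rw [mul_inv_cancel_left₀ (ne_of_lt hApj)] at h3
      linarith
    · have hApj : (A p j : ℝ) = 0 := by exact_mod_cast hpj
      have hFA : ∀ k, (projMatrix A j i * A) ⟨p, hp⟩ k = A p k := by
        intro k
        simp [projMatrix, Matrix.mul_apply, unitRow, hpj, ite_mul, Finset.sum_ite_eq']
      have hFb : (projMatrix A j i).mulVec b ⟨p, hp⟩ = b p := by
        simp [projMatrix, Matrix.mulVec, dotProduct, unitRow, hpj, ite_mul,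
          Finset.sum_ite_eq']
      have h := hcon
      simp only [SatProj, SatSys, hFA, hFb] at h
      rw [hsplit p, hApj] at h
      rw [hApj]
      linarith
    · have hApj : (0:ℝ) < (A p j : ℝ) := by exact_mod_cast hpj
      have hFA : ∀ k, (projMatrix A j i * A) ⟨p, hp⟩ k
          = (A p j)⁻¹ * A p k - (A i j)⁻¹ * A i k := by
        intro k
        simp [projMatrix, Matrix.mul_apply, unitRow, hpj, not_lt_of_gt hpj, sub_mul, ite_mul,
          Finset.sum_sub_distrib, Finset.sum_ite_eq']
      have hFb : (projMatrix A j i).mulVec b ⟨p, hp⟩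
          = (A p j)⁻¹ * b p - (A i j)⁻¹ * b i := by
        simp [projMatrix, Matrix.mulVec, dotProduct, unitRow, hpj, not_lt_of_gt hpj,
          sub_mul, ite_mul, Finset.sum_sub_distrib, Finset.sum_ite_eq']
      have h1 : (A p j : ℝ)⁻¹ * (∑ k, (A p k : ℝ) * x k)
            - (A i j : ℝ)⁻¹ * (∑ k, (A i k : ℝ) * x k)
          ≤ (A p j : ℝ)⁻¹ * (b p : ℝ) - (A i j : ℝ)⁻¹ * (b i : ℝ) := by
        have h := hcon
        simp only [SatProj, SatSys, hFA, hFb] at h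
        push_cast at h
        simpa [sub_mul, Finset.sum_sub_distrib, mul_assoc, Finset.mul_sum] using h
      rw [hsplit i, hsplit p, mul_add, mul_add, ← mul_assoc, ← mul_assoc,
        inv_mul_cancel₀ hAij, inv_mul_cancel₀ (ne_of_gt hApj)] at h1
      have h2 : r ≤ (A p j : ℝ)⁻¹ * ((b p : ℝ) - ∑ k ∈ Finset.univ.erase j, (A p k : ℝ) * x k) := by
        rw [hr]
        ring_nf
        ring_nf at h1
        linarith
      have h3 := mul_le_mul_of_nonneg_left h2 (le_of_lt hApj)
      rw [mul_inv_cancel_left₀ (ne_of_gt hApj)] at h3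
      linarith
end

section
/- Let A ∈ ℚ^{m×n} and b ∈ ℚ^m. If there exists x ∈ ℝ^n with A x ≤ b componentwise, then there exists q ∈ ℚ^n with A q ≤ b componentwise. -/
/-!
A `ℚ`-linear map `f : ℝ → ℝ` with `f 1 = 1` fixes the rationals and commutes with rational
matrices, so applied to the coordinates of a real solution `x` it preserves every constraint that
`x` satisfies with equality. Extending `1` to a `ℚ`-basis of `ℝ` and sending the other basis
vectors to nearby rationals gives such an `f` for which `f ∘ x` is rational and as close to `x` as
we like, hence also keeps the strict constraints strict.
-/

open Filter Topology Function

namespace Module.Basis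

variable {ι K V M M' : Type*} [CommSemiring K] [AddCommMonoid V] [Module K V]
  [AddCommMonoid M] [Module K M] [AddCommMonoid M'] [Module K M']

theorem constr_comp_linearMap (B : Basis ι K V) (φ : M →ₗ[K] M') (r : ι → M) :
    B.constr K (φ ∘ r) = φ ∘ₗ B.constr K r :=
  B.ext fun i => by simp

theorem continuous_constr_apply [TopologicalSpace M] [ContinuousAdd M] [ContinuousConstSMul K M]
    (B : Basis ι K V) (v : V) : Continuous fun g : ι → M => B.constr K g v := by
  simp only [B.constr_apply, Finsupp.sum]
  exact continuous_finsetSum _ fun t _ => (continuous_apply t).const_smul _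

end Module.Basis

theorem exists_ratLinearMap_ratCast_mem_nhds {κ : Type*} (x : κ → ℝ) {U : Set (κ → ℝ)}
    (hU : U ∈ 𝓝 x) :
    ∃ (f : ℝ →ₗ[ℚ] ℝ) (q : κ → ℚ), f 1 = 1 ∧ (∀ k, f (x k) = q k) ∧
      (fun k => (q k : ℝ)) ∈ U := by
  have hone : LinearIndepOn ℚ id ({1} : Set ℝ) :=
    (linearIndepOn_singleton_iff ℚ).mpr one_ne_zero
  let B := Module.Basis.extend hone
  let i₀ : hone.extend (Set.subset_univ _) := ⟨1, Module.Basis.subset_extend hone rfl⟩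
  have hBi₀ : B i₀ = 1 := Module.Basis.extend_apply_self hone i₀
  -- Overwriting the value at `i₀` by `1` makes `f 1 = 1` hold exactly for every choice of `g`.
  let Ψ : (_ → ℝ) → κ → ℝ := fun g k => B.constr ℚ (update g i₀ 1) (x k)
  have hΨ : Continuous Ψ := continuous_pi fun k =>
    (B.continuous_constr_apply (x k)).comp (continuous_id.update i₀ continuous_const)
  have hΨB : Ψ B = x := by
    funext k
    simp only [Ψ]
    rw [update_eq_self_iff.mpr hBi₀.symm,
      B.constr_eq ℚ (g := B) (f := LinearMap.id) fun _ => rfl, LinearMap.id_apply]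
  obtain ⟨g, hg_rat, hgU⟩ :=
    (dense_pi Set.univ fun _ _ => Rat.denseRange_cast).inter_nhds_nonempty
      (hΨ.continuousAt.preimage_mem_nhds (hΨB ▸ hU))
  choose r hr using fun t => hg_rat t (Set.mem_univ t)
  have hg : update g i₀ 1 = Algebra.linearMap ℚ ℝ ∘ update r i₀ 1 := by
    rw [comp_update, Algebra.linearMap_apply, map_one]
    exact congrArg (update · i₀ 1) (funext fun t => (hr t).symm)
  have hfq (k : κ) :
      B.constr ℚ (update g i₀ 1) (x k) = B.constr ℚ (update r i₀ 1) (x k) := by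
    rw [hg, B.constr_comp_linearMap]
    rfl
  refine ⟨B.constr ℚ (update g i₀ 1), fun k => B.constr ℚ (update r i₀ 1) (x k), ?_, hfq,
    ?_⟩
  · simpa only [update_self, hBi₀] using B.constr_basis ℚ (update g i₀ 1) i₀
  · exact funext hfq ▸ hgU

/-- Every satisfiable system of linear constraints with rational coefficients has a
rational-valued solution. -/
theorem rational_solution_of_real_solution {m n : ℕ} (A : Matrix (Fin m) (Fin n) ℚ)
    (b : Fin m → ℚ)
    (h : ∃ x : Fin n → ℝ, ∀ i, ∑ k, (A i k : ℝ) * x k ≤ (b i : ℝ)) :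
    ∃ q : Fin n → ℚ, ∀ i, ∑ k, A i k * q k ≤ b i := by
  obtain ⟨x, hx⟩ := h
  have hstrict : ∀ᶠ y in 𝓝 x,
      ∀ i, ∑ k, (A i k : ℝ) * x k < b i → ∑ k, (A i k : ℝ) * y k < b i :=
    eventually_all.2 fun i => eventually_imp_distrib_left.2 fun hi =>
      ((continuous_finsetSum _ fun k _ => (continuous_apply k).const_mul _).continuousAt
        |>.eventually_lt continuousAt_const hi)
  obtain ⟨f, q, hf1, hfq, hq⟩ := exists_ratLinearMap_ratCast_mem_nhds x hstrict
  have hf_ratCast_mul (c : ℚ) (y : ℝ) : f (c * y) = c * f y := map_ratCast_smul f ℝ ℝ c y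
  refine ⟨q, fun i => ?_⟩
  suffices ∑ k, (A i k : ℝ) * q k ≤ b i by exact_mod_cast this
  rcases (hx i).eq_or_lt with htight | hlt
  · refine le_of_eq ?_
    calc ∑ k, (A i k : ℝ) * q k = f (∑ k, (A i k : ℝ) * x k) := by
          simp only [map_sum, hf_ratCast_mul, hfq]
      _ = b i := by rw [htight, ← mul_one (b i : ℝ), hf_ratCast_mul, hf1]
  · exact (hq i hlt).le
end

section
/- (Farkas' Lemma) Let A ∈ ℚ^{m×n} and b ∈ ℚ^m. The system A x ≤ b is satisfiable (i.e. there exists x ∈ ℝ^n with A x ≤ b componentwise) if and only if for every row vector f ∈ ℚ^{1×m} with f ≥ 0 componentwise and f A = 0, it holds that f b ≥ 0. -/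
open Matrix Finset

/-- Pushforward identity for the Fourier–Motzkin multipliers. -/
lemma fm_push {ι : Type} [Fintype ι] (a : ι → ℚ) (g : ι ⊕ ι × ι → ℚ) (w : ι → ℚ) :
    ∑ i, ((if a i = 0 then g (.inl i) else 0)
       + ∑ q, (if 0 < a i ∧ a q < 0 then g (.inr (i,q)) / a i else 0)
       + ∑ p, (if 0 < a p ∧ a i < 0 then g (.inr (p,i)) / (-(a i)) else 0)) * w i
    = (∑ j, g (Sum.inl j) * (if a j = 0 then w j else 0))
      + ∑ pq : ι × ι, g (Sum.inr pq) *
          (if 0 < a pq.1 ∧ a pq.2 < 0 then w pq.1 / a pq.1 - w pq.2 / a pq.2 else 0) := by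
  have e1 : ∑ i, (if a i = 0 then g (Sum.inl i) else 0) * w i
      = ∑ j, g (Sum.inl j) * (if a j = 0 then w j else 0) := by
    apply Finset.sum_congr rfl; intro i _; split_ifs <;> ring
  have e2 : (∑ i, (∑ q, (if 0 < a i ∧ a q < 0 then g (.inr (i,q)) / a i else 0)) * w i)
      + ∑ i, (∑ p, (if 0 < a p ∧ a i < 0 then g (.inr (p,i)) / (-(a i)) else 0)) * w i
      = ∑ pq : ι × ι, g (Sum.inr pq) *
          (if 0 < a pq.1 ∧ a pq.2 < 0 then w pq.1 / a pq.1 - w pq.2 / a pq.2 else 0) := by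
    simp only [Finset.sum_mul]
    rw [Finset.sum_comm (s := Finset.univ) (t := Finset.univ)
      (f := fun i p => (if 0 < a p ∧ a i < 0 then g (.inr (p,i)) / (-(a i)) else 0) * w i)]
    rw [Fintype.sum_prod_type, ← Finset.sum_add_distrib]
    apply Finset.sum_congr rfl
    intro p _
    rw [← Finset.sum_add_distrib]
    apply Finset.sum_congr rfl
    intro q _
    by_cases h : 0 < a p ∧ a q < 0
    · simp only [if_pos h]
      rw [div_neg]
      ring
    · simp [if_neg h]
  calc ∑ i, ((if a i = 0 then g (.inl i) else 0)
       + ∑ q, (if 0 < a i ∧ a q < 0 then g (.inr (i,q)) / a i else 0)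
       + ∑ p, (if 0 < a p ∧ a i < 0 then g (.inr (p,i)) / (-(a i)) else 0)) * w i
      = (∑ i, (if a i = 0 then g (Sum.inl i) else 0) * w i)
        + ((∑ i, (∑ q, (if 0 < a i ∧ a q < 0 then g (.inr (i,q)) / a i else 0)) * w i)
        + ∑ i, (∑ p, (if 0 < a p ∧ a i < 0 then g (.inr (p,i)) / (-(a i)) else 0)) * w i) := by
        simp only [add_mul, Finset.sum_add_distrib]; ring
    _ = _ := by rw [e1, e2]

/-- Fourier–Motzkin dichotomy: any rational system is solvable over `ℚ` or admits a
nonnegative rational certificate of infeasibility. -/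
theorem fm_dichotomy : ∀ (n : ℕ) (ι : Type) [Fintype ι] (A : ι → Fin n → ℚ) (b : ι → ℚ),
    (∃ x : Fin n → ℚ, ∀ i, ∑ k, A i k * x k ≤ b i) ∨
    (∃ f : ι → ℚ, (∀ i, 0 ≤ f i) ∧ (∀ k, ∑ i, f i * A i k = 0) ∧ ∑ i, f i * b i < 0) := by
  intro n
  induction n with
  | zero =>
    intro ι _ A b
    by_cases h : ∀ i, 0 ≤ b i
    · left
      exact ⟨fun k => 0, fun i => by simpa using h i⟩
    · right
      push_neg at h
      obtain ⟨i, hi⟩ := h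
      classical
      refine ⟨fun j => if j = i then 1 else 0, ?_, ?_, ?_⟩
      · intro j; dsimp only; split_ifs <;> norm_num
      · exact fun k => k.elim0
      · simp [Finset.sum_ite_eq', hi]
  | succ n ih =>
    intro ι _ A b
    classical
    set a : ι → ℚ := fun i => A i 0 with ha
    set r : ι → Fin n → ℚ := fun i k => A i k.succ with hr
    set A' : ι ⊕ ι × ι → Fin n → ℚ := Sum.elim
      (fun j k => if a j = 0 then r j k else 0)
      (fun pq k => if 0 < a pq.1 ∧ a pq.2 < 0 then r pq.1 k / a pq.1 - r pq.2 k / a pq.2 else 0)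
      with hA'
    set b' : ι ⊕ ι × ι → ℚ := Sum.elim
      (fun j => if a j = 0 then b j else 0)
      (fun pq => if 0 < a pq.1 ∧ a pq.2 < 0 then b pq.1 / a pq.1 - b pq.2 / a pq.2 else 0)
      with hb'
    rcases ih (ι ⊕ ι × ι) A' b' with ⟨x', hx'⟩ | ⟨g, hg0, hgA, hgb⟩
    · -- feasible: extend x' with a value for variable 0
      left
      set R : ι → ℚ := fun i => ∑ k, r i k * x' k with hR
      have hZ : ∀ i, a i = 0 → R i ≤ b i := by
        intro i hai
        have := hx' (Sum.inl i)
        simpa [hA', hb', hai] using this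
      have hPN : ∀ p q, 0 < a p → a q < 0 → (b q - R q) / a q ≤ (b p - R p) / a p := by
        intro p q hp hq
        have h1 := hx' (Sum.inr (p, q))
        rw [show A' (Sum.inr (p,q)) = fun k => if 0 < a p ∧ a q < 0 then
              r p k / a p - r q k / a q else 0 from rfl] at h1
        simp only [hb', Sum.elim_inr, if_pos (And.intro hp hq)] at h1
        have h2 : ∑ k, (r p k / a p - r q k / a q) * x' k = R p / a p - R q / a q := by
          rw [hR]
          rw [Finset.sum_div, Finset.sum_div, ← Finset.sum_sub_distrib]
          apply Finset.sum_congr rfl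
          intro k _
          ring
        rw [h2] at h1
        rw [sub_div, sub_div]
        linarith
      obtain ⟨x0, hub, hlb⟩ : ∃ x0 : ℚ, (∀ p, 0 < a p → x0 ≤ (b p - R p) / a p) ∧
          (∀ q, a q < 0 → (b q - R q) / a q ≤ x0) := by
        rcases (Finset.univ.filter fun p => 0 < a p).eq_empty_or_nonempty with hS | hS
        · have hSe : ∀ p, ¬ (0 < a p) := by
            intro p hp
            exact Finset.eq_empty_iff_forall_notMem.mp hS p
              (Finset.mem_filter.mpr ⟨Finset.mem_univ p, hp⟩)
          rcases (Finset.univ.filter fun q => a q < 0).eq_empty_or_nonempty with hT | hT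
          · have hTe : ∀ q, ¬ (a q < 0) := by
              intro q hq
              exact Finset.eq_empty_iff_forall_notMem.mp hT q
                (Finset.mem_filter.mpr ⟨Finset.mem_univ q, hq⟩)
            exact ⟨0, fun p hp => absurd hp (hSe p), fun q hq => absurd hq (hTe q)⟩
          · refine ⟨(Finset.univ.filter fun q => a q < 0).sup' hT
              (fun q => (b q - R q) / a q), fun p hp => absurd hp (hSe p), fun q hq => ?_⟩
            exact Finset.le_sup' (fun q => (b q - R q) / a q)
              (Finset.mem_filter.mpr ⟨Finset.mem_univ q, hq⟩)
        · refine ⟨(Finset.univ.filter fun p => 0 < a p).inf' hS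
            (fun p => (b p - R p) / a p), fun p hp => ?_, fun q hq => ?_⟩
          · exact Finset.inf'_le _ (Finset.mem_filter.mpr ⟨Finset.mem_univ p, hp⟩)
          · apply Finset.le_inf'
            intro p hpS
            exact hPN p q (Finset.mem_filter.mp hpS).2 hq
      refine ⟨Fin.cons x0 x', fun i => ?_⟩
      have hsum : ∑ k, A i k * (Fin.cons x0 x' : Fin (n+1) → ℚ) k = a i * x0 + R i := by
        rw [Fin.sum_univ_succ]
        simp only [Fin.cons_zero, Fin.cons_succ, hR, hr, ha]
      rw [hsum]
      rcases lt_trichotomy (a i) 0 with h | h | h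
      · have := hlb i h
        rw [div_le_iff_of_neg h] at this
        linarith
      · rw [h, zero_mul, zero_add]
        exact hZ i h
      · have := hub i h
        rw [le_div_iff₀ h] at this
        linarith
    · -- certificate: pull back
      right
      refine ⟨fun i => (if a i = 0 then g (.inl i) else 0)
        + (∑ q, (if 0 < a i ∧ a q < 0 then g (.inr (i,q)) / a i else 0))
        + (∑ p, (if 0 < a p ∧ a i < 0 then g (.inr (p,i)) / (-(a i)) else 0)), ?_, ?_, ?_⟩
      · intro i
        dsimp only
        refine add_nonneg (add_nonneg ?_ ?_) ?_
        · split_ifs with h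
          · exact hg0 _
          · exact le_refl 0
        · apply Finset.sum_nonneg
          intro q _
          split_ifs with h
          · exact div_nonneg (hg0 _) (le_of_lt h.1)
          · exact le_refl 0
        · apply Finset.sum_nonneg
          intro p _
          split_ifs with h
          · exact div_nonneg (hg0 _) (by linarith [h.2])
          · exact le_refl 0
      · intro k
        refine Fin.cases ?_ ?_ k
        · -- column 0
          have h := fm_push a g a
          have hz1 : ∀ j : ι, g (Sum.inl j) * (if a j = 0 then a j else 0) = 0 := by
            intro j; split_ifs with hj
            · rw [hj, mul_zero]
            · rw [mul_zero]
          have hz2 : ∀ pq : ι × ι, g (Sum.inr pq) *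
              (if 0 < a pq.1 ∧ a pq.2 < 0 then a pq.1 / a pq.1 - a pq.2 / a pq.2 else 0) = 0 := by
            intro pq; split_ifs with hpq
            · rw [div_self (ne_of_gt hpq.1), div_self (ne_of_lt hpq.2), sub_self, mul_zero]
            · rw [mul_zero]
          simp only [hz1, hz2, Finset.sum_const_zero, add_zero] at h
          exact h
        · intro k
          have h := fm_push a g (fun i => r i k)
          have h2 := hgA k
          rw [Fintype.sum_sum_type] at h2
          exact h.trans h2
      · have h := fm_push a g b
        rw [Fintype.sum_sum_type] at hgb
        exact lt_of_le_of_lt (le_of_eq h) hgb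

/-- Farkas' Lemma: the system `A x ≤ b` is satisfiable over `ℝ^n` iff every nonnegative
rational row vector `f` with `f A = 0` satisfies `f b ≥ 0`. -/
theorem farkas_lemma {m n : ℕ} (A : Matrix (Fin m) (Fin n) ℚ) (b : Fin m → ℚ) :
    (∃ x : Fin n → ℝ, ∀ i, ∑ k, (A i k : ℝ) * x k ≤ (b i : ℝ)) ↔
      ∀ f : Fin m → ℚ, (∀ i, 0 ≤ f i) → Matrix.vecMul f A = 0 → 0 ≤ f ⬝ᵥ b := by
  constructor
  · rintro ⟨x, hx⟩ f hf0 hfA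
    have key : ((f ⬝ᵥ b : ℚ) : ℝ) ≥ 0 := by
      have h1 : ∀ i, (f i : ℝ) * (∑ k, (A i k : ℝ) * x k) ≤ (f i : ℝ) * (b i : ℝ) := by
        intro i
        exact mul_le_mul_of_nonneg_left (hx i) (by exact_mod_cast hf0 i)
      have h2 : ∑ i, (f i : ℝ) * (∑ k, (A i k : ℝ) * x k) ≤ ∑ i, (f i : ℝ) * (b i : ℝ) :=
        Finset.sum_le_sum fun i _ => h1 i
      have h3 : ∑ i, (f i : ℝ) * (∑ k, (A i k : ℝ) * x k)
          = ∑ k, (∑ i, (f i : ℝ) * (A i k : ℝ)) * x k := by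
        simp only [Finset.mul_sum, Finset.sum_mul]
        rw [Finset.sum_comm]
        apply Finset.sum_congr rfl; intro k _
        apply Finset.sum_congr rfl; intro i _
        ring
      have h4 : ∀ k, ∑ i, (f i : ℝ) * (A i k : ℝ) = 0 := by
        intro k
        have := congrFun hfA k
        have h5 : ∑ i, f i * A i k = 0 := by
          simpa [Matrix.vecMul, dotProduct] using this
        exact_mod_cast h5
      have h6 : ∑ i, (f i : ℝ) * (∑ k, (A i k : ℝ) * x k) = 0 := by
        rw [h3]
        apply Finset.sum_eq_zero
        intro k _
        rw [h4 k, zero_mul]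
      have h7 : ((f ⬝ᵥ b : ℚ) : ℝ) = ∑ i, (f i : ℝ) * (b i : ℝ) := by
        simp [dotProduct]
      linarith
    exact_mod_cast key
  · intro h
    rcases fm_dichotomy n (Fin m) (fun i k => A i k) b with ⟨x, hx⟩ | ⟨f, hf0, hfA, hfb⟩
    · exact ⟨fun k => (x k : ℝ), fun i => by dsimp only; exact_mod_cast hx i⟩
    · exfalso
      have h1 : Matrix.vecMul f A = 0 := by
        funext k
        simpa [Matrix.vecMul, dotProduct] using hfA k
      have h2 := h f hf0 h1
      have h3 : f ⬝ᵥ b = ∑ i, f i * b i := rfl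
      rw [h3] at h2
      linarith
end

section
/- (Fundamental Theorem of Linear Programming) Let A ∈ ℚ^{m×n} and b ∈ ℚ^m. The system A x ≤ b is satisfiable if and only if there exists a subset I ⊆ {1,…,m} such that the submatrix A_I (consisting of the rows of A with indices in I) has linearly independent rows, |I| equals the rank of A, and there exists x ∈ ℝ^n with A x ≤ b componentwise and A_{i,−} x = b_i for every i ∈ I. -/
/-!
Push a feasible point along a direction `w` orthogonal to its tight rows but not to some other
row `A j`: the tight rows stay tight, and by the minimum ratio test the largest feasible step makes
a new row tight, one outside the span of the old tight rows. As spans of rows cannot grow forever,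
some feasible point has tight rows spanning the row space of `A`, and a basis of that span chosen
among them has `rank A` elements. Since `w` can be taken rational, all linear algebra stays over
`ℚ` although the point is real.
-/

open Matrix Submodule Set

theorem exists_min_ratio {L ι : Type*} [Field L] [LinearOrder L] [IsStrictOrderedRing L]
    [Fintype ι] (s c : ι → L) (hs : 0 ≤ s) {j : ι} (hj : 0 < c j) :
    ∃ t, (∀ i, t * c i ≤ s i) ∧ ∃ i, 0 < c i ∧ t * c i = s i := by
  classical
  obtain ⟨i, hi, hmin⟩ := (Finset.univ.filter (0 < c ·)).exists_min_image (fun i ↦ s i / c i)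
    ⟨j, by simpa using hj⟩
  rw [Finset.mem_filter] at hi
  refine ⟨s i / c i, fun k ↦ ?_, i, hi.2, div_mul_cancel₀ _ hi.2.ne'⟩
  rcases le_or_gt (c k) 0 with hk | hk
  · exact (mul_nonpos_of_nonneg_of_nonpos (div_nonneg (hs i) hi.2.le) hk).trans (hs k)
  · exact (le_div_iff₀ hk).mp (hmin k (by simpa using hk))

theorem Submodule.exists_dotProduct_eq_zero_of_notMem {K n : Type*} [Field K] [Fintype n]
    {U : Submodule K (n → K)} {v : n → K} (hv : v ∉ U) :
    ∃ w, (∀ u ∈ U, u ⬝ᵥ w = 0) ∧ v ⬝ᵥ w = 1 := by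
  classical
  obtain ⟨φ, hφv, hφU⟩ := U.exists_dual_map_eq_bot_of_notMem hv inferInstance
  have hφ : ∀ u, u ⬝ᵥ (dotProductEquiv K n).symm φ = φ u := fun u ↦ by
    rw [dotProduct_comm, ← dotProductEquiv_apply_apply, LinearEquiv.apply_symm_apply]
  refine ⟨(φ v)⁻¹ • (dotProductEquiv K n).symm φ, fun u hu ↦ ?_, ?_⟩
  · rw [dotProduct_smul, hφ, LinearMap.le_ker_iff_map.mpr hφU hu, smul_zero]
  · rw [dotProduct_smul, hφ, smul_eq_mul, inv_mul_cancel₀ hφv]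

theorem Matrix.exists_linearIndepOn_row_card_eq_rank {K m n : Type*} [Field K] [Fintype m]
    [Fintype n] (A : Matrix m n K) {s : Set m} (hs : span K (A.row '' s) = span K (range A.row)) :
    ∃ I : Finset m, ↑I ⊆ s ∧ LinearIndepOn K A.row ↑I ∧ I.card = A.rank := by
  obtain ⟨B, hBs, -, hsB, hB⟩ := exists_linearIndepOn_extension (linearIndepOn_empty K A.row)
    (empty_subset s)
  lift B to Finset m using B.toFinite
  refine ⟨B, hBs, hB, ?_⟩
  have hspan : span K (A.row '' B) = span K (range A.row) :=
    hs ▸ le_antisymm (span_mono (image_mono hBs)) (span_le.mpr hsB)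
  rw [rank_eq_finrank_span_row, ← hspan, image_eq_range, finrank_span_eq_card hB]
  exact (Fintype.card_coe B).symm

section Feasibility

variable {K L m n : Type*} [Field K] [Field L] [LinearOrder L] [IsStrictOrderedRing L]
  [Fintype m] [Fintype n] {f : K →+* L} {A : Matrix m n K} {b : m → K}

variable (f A b) in
def tightRows (x : n → L) : Set m := {i | (A.map f *ᵥ x) i = f (b i)}

theorem exists_span_tightRows_gt {x : n → L} (hx : A.map f *ᵥ x ≤ f ∘ b) {j : m}
    (hj : A.row j ∉ span K (A.row '' tightRows f A b x)) :
    ∃ y, A.map f *ᵥ y ≤ f ∘ b ∧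
      span K (A.row '' tightRows f A b x) < span K (A.row '' tightRows f A b y) := by
  obtain ⟨w, hwU, hwj⟩ := exists_dotProduct_eq_zero_of_notMem hj
  have hrow : ∀ k, A.row k ⬝ᵥ w = (A *ᵥ w) k := fun _ ↦ rfl
  have hw_tight : ∀ k ∈ tightRows f A b x, (A *ᵥ w) k = 0 :=
    fun k hk ↦ hwU _ (subset_span ⟨k, hk, rfl⟩)
  obtain ⟨t, hle, i, hi, heq⟩ := exists_min_ratio (f ∘ b - A.map f *ᵥ x) (f ∘ (A *ᵥ w))
    (sub_nonneg.mpr hx) (j := j) (by simp [← hrow, hwj])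
  set y := x + t • (f ∘ w)
  have hy : ∀ k, (A.map f *ᵥ y) k = (A.map f *ᵥ x) k + t * f ((A *ᵥ w) k) := fun k ↦ by
    simp [y, mulVec_add, mulVec_smul, RingHom.map_mulVec]
  refine ⟨y, fun k ↦ ?_, SetLike.lt_iff_le_and_exists.mpr
    ⟨span_mono (image_mono fun k hk ↦ ?_), A.row i, subset_span ⟨i, ?_, rfl⟩, fun hmem ↦ ?_⟩⟩
  · have := hle k
    simp only [Pi.sub_apply, Function.comp_apply] at this ⊢
    rw [hy]
    linarith
  · simp only [tightRows, mem_ofPred_eq, hy, hw_tight k hk, map_zero, mul_zero, add_zero] at hk ⊢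
    exact hk
  · simp only [Pi.sub_apply, Function.comp_apply] at heq
    simp only [tightRows, mem_ofPred_eq, hy, heq, add_sub_cancel]
  · exact hi.ne' (by rw [Function.comp_apply, ← hrow, hwU _ hmem, map_zero])

theorem exists_span_tightRows_eq {x : n → L} (hx : A.map f *ᵥ x ≤ f ∘ b) :
    ∃ y, A.map f *ᵥ y ≤ f ∘ b ∧ span K (A.row '' tightRows f A b y) = span K (range A.row) := by
  obtain ⟨_, ⟨y, hy, rfl⟩, hmax⟩ := wellFounded_gt.has_min
    {U | ∃ y, A.map f *ᵥ y ≤ f ∘ b ∧ span K (A.row '' tightRows f A b y) = U} ⟨_, x, hx, rfl⟩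
  refine ⟨y, hy, le_antisymm (span_mono (image_subset_range _ _)) (span_le.mpr ?_)⟩
  rintro _ ⟨j, rfl⟩
  by_contra hj
  obtain ⟨z, hz, hlt⟩ := exists_span_tightRows_gt hy hj
  exact hmax _ ⟨z, hz, rfl⟩ hlt

end Feasibility

/-- Fundamental Theorem of Linear Programming: the system `A x ≤ b` is satisfiable over
`ℝ^n` iff there is a subset `I ⊆ {1,…,m}` of rows such that the submatrix `A_I` has
linearly independent rows, `|I| = rank A`, and some `x ∈ ℝ^n` satisfies `A x ≤ b` and
the equalities `A_{i,−} x = b_i` for all `i ∈ I`. -/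
theorem fundamental_theorem_of_linear_programming {m n : ℕ}
    (A : Matrix (Fin m) (Fin n) ℚ) (b : Fin m → ℚ) :
    (∃ x : Fin n → ℝ, ∀ i, ∑ k, (A i k : ℝ) * x k ≤ (b i : ℝ)) ↔
      ∃ I : Finset (Fin m),
        LinearIndependent ℚ (fun i : {i // i ∈ I} => A i.1) ∧
        I.card = A.rank ∧
        ∃ x : Fin n → ℝ, (∀ i, ∑ k, (A i k : ℝ) * x k ≤ (b i : ℝ)) ∧
          ∀ i ∈ I, ∑ k, (A i k : ℝ) * x k = (b i : ℝ) := by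
  constructor
  · rintro ⟨x, hx⟩
    obtain ⟨y, hy, hspan⟩ := exists_span_tightRows_eq (f := Rat.castHom ℝ) (A := A) (b := b) hx
    obtain ⟨I, hI, hli, hcard⟩ := A.exists_linearIndepOn_row_card_eq_rank hspan
    exact ⟨I, hli, hcard, y, hy, fun i hi ↦ hI hi⟩
  · rintro ⟨-, -, -, x, hx, -⟩
    exact ⟨x, hx⟩
end
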